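/- arXiv:math/0210438 — 6 statements merged into one kernel-verified Lean document; each statement's English description precedes it below -/
import Mathlib

section
/- Let F be the free group on two generators x and y, and let φ be an automorphism of F such that φ(y) = y^ν for some ν ∈ {1, -1}. Then φ(x) = y^k x^ε y^l for some integers k, l and some ε ∈ {1, -1}. -/
/-!
Write `φ x = y ^ k * u * y ^ l` where the reduced word of `u` neither begins nor ends with
`y ^ (±1)`. As `φ x` and `φ y = y ^ ν` generate `F`, so do `u` and `y`; in particular
`x ∈ ⟨u, y⟩`. Every element of `⟨u, y⟩` can be written
`y ^ c₀ * u ^ d₁ * y ^ c₁ * ⋯ * u ^ dₙ * y ^ cₙ` with all inner exponents nonzero.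
Writing `u = v * r * v⁻¹` with `r` cyclically reduced gives `u ^ d = v * r ^ d * v⁻¹` without
cancellation, so for `d ≠ 0` the word of `u ^ d` is at least as long as that of `u` and has the
same first and last letters. Hence nothing cancels between the syllables, and every element of
`⟨u, y⟩` outside `⟨y⟩` is at least as long as `u`. For `x` this forces `u` to be a single letter,
i.e. `u = x ^ (±1)`.
-/

open FreeGroup Subgroup

section AlternatingProduct

variable {G : Type*} [Group G] {w y t : G}

/-- `t = w ^ d₁ * y ^ c₁ * ⋯ * w ^ dₙ * y ^ cₙ` with all `dᵢ ≠ 0` and `cᵢ ≠ 0` for `i < n`. -/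
inductive IsAlternatingProduct (w y : G) : G → Prop
  | one : IsAlternatingProduct w y 1
  | cons {d c : ℤ} {t : G} (hd : d ≠ 0) (hct : c ≠ 0 ∨ t = 1)
      (ht : IsAlternatingProduct w y t) : IsAlternatingProduct w y (w ^ d * y ^ c * t)

theorem IsAlternatingProduct.exists_zpow_mul_zpow_mul_eq (ht : IsAlternatingProduct w y t)
    (e c : ℤ) :
    ∃ (c' : ℤ) (s : G), IsAlternatingProduct w y s ∧ w ^ e * (y ^ c * t) = y ^ c' * s := by
  by_cases he : e = 0
  · exact ⟨c, t, ht, by rw [he, zpow_zero, one_mul]⟩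
  by_cases hct : c ≠ 0 ∨ t = 1
  · exact ⟨0, _, .cons he hct ht, by rw [zpow_zero, one_mul, mul_assoc]⟩
  obtain ⟨rfl, hne⟩ : c = 0 ∧ t ≠ 1 := by tauto
  cases ht with
  | one => exact absurd rfl hne
  | @cons d c' t' hd hct' ht' =>
    rw [zpow_zero, one_mul, ← mul_assoc, ← mul_assoc, ← zpow_add]
    by_cases hed : e + d = 0
    · exact ⟨c', t', ht', by rw [hed, zpow_zero, one_mul]⟩
    · exact ⟨0, _, .cons hed hct' ht', by rw [zpow_zero, one_mul]⟩

theorem exists_zpow_mul_isAlternatingProduct {g : G} (hg : g ∈ closure {w, y}) :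
    ∃ (c : ℤ) (t : G), IsAlternatingProduct w y t ∧ g = y ^ c * t := by
  induction hg using closure_induction_left with
  | one => exact ⟨0, 1, .one, by simp⟩
  | mul_left x hx g _ ih =>
    obtain ⟨c, t, ht, rfl⟩ := ih
    rcases hx with rfl | rfl
    · simpa using ht.exists_zpow_mul_zpow_mul_eq 1 c
    · exact ⟨1 + c, t, ht, by rw [zpow_add, zpow_one, mul_assoc]⟩
  | inv_mul_cancel x hx g _ ih =>
    obtain ⟨c, t, ht, rfl⟩ := ih
    rcases hx with rfl | rfl
    · simpa using ht.exists_zpow_mul_zpow_mul_eq (-1) c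
    · exact ⟨-1 + c, t, ht, by rw [zpow_add, zpow_neg_one, mul_assoc]⟩

end AlternatingProduct

namespace FreeGroup

open List

variable {α : Type*}

theorem eq_top_of_forall_apply_of_mem {G : Type*} [Group G] (φ : FreeGroup α ≃* G)
    {H : Subgroup G} (h : ∀ a, φ (of a) ∈ H) : H = ⊤ := by
  refine eq_top_iff.mpr fun g _ => ?_
  have hle : closure (Set.range of) ≤ H.comap φ.toMonoidHom :=
    (closure_le _).mpr (Set.range_subset_iff.mpr h)
  have := hle (closure_range_of α ▸ mem_top (φ.symm g))
  rwa [mem_comap, MulEquiv.coe_toMonoidHom, φ.apply_symm_apply] at this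

theorem mk_mem_zpowers_of_forall_fst_eq {b : α} {L : List (α × Bool)}
    (hL : ∀ p ∈ L, p.1 = b) : mk L ∈ zpowers (of b) := by
  induction L with
  | nil => exact one_mem _
  | cons p L ih =>
    obtain ⟨a, s⟩ := p
    obtain rfl : a = b := hL _ mem_cons_self
    rw [← singleton_append, ← mul_mk]
    refine mul_mem ?_ (ih fun q hq => hL q (mem_cons_of_mem _ hq))
    cases s
    · exact inv_mem (mem_zpowers _)
    · exact mem_zpowers _

def AvoidsAtEnds (b : α) (L : List (α × Bool)) : Prop :=
  (∀ p ∈ L.head?, p.1 ≠ b) ∧ ∀ p ∈ L.getLast?, p.1 ≠ b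

theorem AvoidsAtEnds.invRev {b : α} {L : List (α × Bool)} (h : AvoidsAtEnds b L) :
    AvoidsAtEnds b (FreeGroup.invRev L) := by
  simpa [AvoidsAtEnds, FreeGroup.invRev, head?_reverse, getLast?_reverse, and_comm] using h

variable [DecidableEq α]

theorem toWord_mul_of_fst_ne {x y : FreeGroup α}
    (h : ∀ p ∈ x.toWord.getLast?, ∀ q ∈ y.toWord.head?, p.1 ≠ q.1) :
    (x * y).toWord = x.toWord ++ y.toWord := by
  rw [toWord_mul]
  exact IsReduced.reduce_eq <| isChain_append.mpr
    ⟨isReduced_toWord, isReduced_toWord, fun p hp q hq hpq => absurd hpq (h p hp q hq)⟩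

theorem norm_mul_of_fst_ne {x y : FreeGroup α}
    (h : ∀ p ∈ x.toWord.getLast?, ∀ q ∈ y.toWord.head?, p.1 ≠ q.1) :
    norm (x * y) = norm x + norm y := by
  rw [norm, toWord_mul_of_fst_ne h, length_append, norm, norm]

theorem toWord_ne_nil_of_norm_le {v w : FreeGroup α} (hw : w ≠ 1) (h : norm w ≤ norm v) :
    v.toWord ≠ [] := by
  rw [Ne, toWord_eq_nil_iff, ← norm_eq_zero]
  rw [Ne, ← norm_eq_zero] at hw
  omega

theorem fst_eq_of_mem_toWord_of_zpow {b : α} {k : ℤ} {p : α × Bool}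
    (hp : p ∈ (of b ^ k).toWord) : p.1 = b := by
  obtain ⟨n, rfl | rfl⟩ := Int.eq_nat_or_neg k
  · simp_all [mem_replicate]
  · simp_all [invRev, mem_replicate]

theorem toWord_pow_head? (w : FreeGroup α) {n : ℕ} (hn : n ≠ 0) :
    (w ^ n).toWord.head? = w.toWord.head? := by
  rw [toWord_pow, reduceCyclically.reduce_flatten_replicate isReduced_toWord, if_neg hn]
  conv_rhs => rw [← reduceCyclically.conj_conjugator_reduceCyclically w.toWord]
  simp only [head?_append, head?_flatten_replicate hn]

theorem toWord_pow_getLast? (w : FreeGroup α) {n : ℕ} (hn : n ≠ 0) :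
    (w ^ n).toWord.getLast? = w.toWord.getLast? := by
  rw [toWord_pow, reduceCyclically.reduce_flatten_replicate isReduced_toWord, if_neg hn]
  conv_rhs => rw [← reduceCyclically.conj_conjugator_reduceCyclically w.toWord]
  simp only [getLast?_append, getLast?_flatten_replicate hn]

theorem norm_le_norm_pow (w : FreeGroup α) {n : ℕ} (hn : n ≠ 0) : norm w ≤ norm (w ^ n) := by
  rw [norm, norm, toWord_pow, reduceCyclically.reduce_flatten_replicate isReduced_toWord, if_neg hn]
  conv_lhs => rw [← reduceCyclically.conj_conjugator_reduceCyclically w.toWord]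
  simp only [length_append, invRev_length, length_flatten, map_replicate, sum_replicate,
    smul_eq_mul]
  have := Nat.le_mul_of_pos_left (reduceCyclically w.toWord).length (Nat.pos_of_ne_zero hn)
  omega

theorem avoidsAtEnds_toWord_zpow {b : α} {w : FreeGroup α} (hw : AvoidsAtEnds b w.toWord)
    (d : ℤ) : AvoidsAtEnds b (w ^ d).toWord := by
  have pow (v : FreeGroup α) (hv : AvoidsAtEnds b v.toWord) (n : ℕ) :
      AvoidsAtEnds b (v ^ n).toWord := by
    rcases eq_or_ne n 0 with rfl | hn
    · simp [AvoidsAtEnds]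
    · rwa [AvoidsAtEnds, toWord_pow_head? v hn, toWord_pow_getLast? v hn]
  obtain ⟨n, rfl | rfl⟩ := Int.eq_nat_or_neg d
  · simpa using pow w hw n
  · simpa [toWord_inv] using pow w⁻¹ (by simpa [toWord_inv] using hw.invRev) n

theorem norm_le_norm_zpow (w : FreeGroup α) {d : ℤ} (hd : d ≠ 0) :
    norm w ≤ norm (w ^ d) := by
  obtain ⟨n, rfl | rfl⟩ := Int.eq_nat_or_neg d
  · simpa using norm_le_norm_pow w (n := n) (by simpa using hd)
  · simpa using norm_le_norm_pow w⁻¹ (n := n) (by simpa using hd)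

theorem exists_zpow_mul_of_head_fst_ne (b : α) (g : FreeGroup α) :
    ∃ (k : ℤ) (h : FreeGroup α), g = of b ^ k * h ∧ (∀ p ∈ h.toWord.head?, p.1 ≠ b) ∧
      h.toWord <:+ g.toWord := by
  set R := g.toWord.dropWhile (fun p : α × Bool => p.1 = b)
  have hR : (mk R).toWord = R := by
    rw [toWord_mk]
    exact (isReduced_toWord.infix (dropWhile_suffix _).isInfix).reduce_eq
  obtain ⟨k, hk⟩ := mem_zpowers_iff.mp <| mk_mem_zpowers_of_forall_fst_eq
    fun p hp => of_decide_eq_true (mem_takeWhile_imp (p := fun p : α × Bool => p.1 = b) hp)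
  refine ⟨k, mk R, ?_, ?_, by rw [hR]; exact dropWhile_suffix _⟩
  · rw [hk, mul_mk, takeWhile_append_dropWhile, mk_toWord]
  · intro p hp
    have := head?_dropWhile_not (fun p : α × Bool => p.1 = b) g.toWord
    rw [hR] at hp
    rw [Option.mem_def.mp hp] at this
    simpa using this

theorem exists_zpow_mul_mul_zpow (b : α) (g : FreeGroup α) :
    ∃ (k l : ℤ) (h : FreeGroup α),
      g = of b ^ k * h * of b ^ l ∧ AvoidsAtEnds b h.toWord := by
  -- the trailing letters of `g` are the inverted leading letters of `g⁻¹`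
  obtain ⟨l, h₁, hg, hh₁, -⟩ := exists_zpow_mul_of_head_fst_ne b g⁻¹
  obtain ⟨k, h, hh, hhead, hsuf⟩ := exists_zpow_mul_of_head_fst_ne b h₁⁻¹
  refine ⟨k, -l, h, ?_, hhead, fun p hp => ?_⟩
  · rw [← inv_inv g, hg, mul_inv_rev, hh, zpow_neg]
  · obtain ⟨t, ht⟩ := hsuf
    have hlast : p ∈ (invRev h₁.toWord).getLast? := by
      rw [← toWord_inv, ← ht, getLast?_append, Option.mem_def.mp hp]; rfl
    simp only [invRev, getLast?_reverse, head?_map, Option.mem_def, Option.map_eq_some_iff] at hlast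
    obtain ⟨q, hq, rfl⟩ := hlast
    exact hh₁ q hq

variable {b : α} {w : FreeGroup α}

theorem head_fst_eq_of_zpow_mul {c : ℤ} {t : FreeGroup α} (hct : c ≠ 0 ∨ t = 1)
    (ht : ∀ p ∈ t.toWord.head?, p.1 ≠ b) :
    ∀ p ∈ (of b ^ c * t).toWord.head?, p.1 = b := by
  intro p hp
  rcases hct with hc | rfl
  · have hne := toWord_ne_nil_of_norm_le (of_ne_one b) (norm_le_norm_zpow (of b) hc)
    rw [toWord_mul_of_fst_ne, head?_append_of_ne_nil _ hne] at hp
    · exact fst_eq_of_mem_toWord_of_zpow (mem_of_mem_head? hp)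
    · intro q hq r hr
      rw [fst_eq_of_mem_toWord_of_zpow (mem_of_mem_getLast? hq)]
      exact (ht r hr).symm
  · rw [mul_one] at hp
    exact fst_eq_of_mem_toWord_of_zpow (mem_of_mem_head? hp)

theorem _root_.IsAlternatingProduct.eq_one_or_norm_le (hw : w ≠ 1)
    (hwb : AvoidsAtEnds b w.toWord)
    {t : FreeGroup α} (ht : IsAlternatingProduct w (of b) t) :
    t = 1 ∨ (∀ p ∈ t.toWord.head?, p.1 ≠ b) ∧ norm w ≤ norm t := by
  induction ht with
  | one => exact .inl rfl
  | @cons d c t hd hct _ ih =>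
    right
    have hs : ∀ p ∈ (of b ^ c * t).toWord.head?, p.1 = b := by
      refine head_fst_eq_of_zpow_mul hct ?_
      rcases ih with rfl | ⟨ht, -⟩
      · simp
      · exact ht
    have hwd := avoidsAtEnds_toWord_zpow hwb d
    have hwd_norm := norm_le_norm_zpow w hd
    have hjoin : ∀ p ∈ (w ^ d).toWord.getLast?, ∀ q ∈ (of b ^ c * t).toWord.head?,
        p.1 ≠ q.1 :=
      fun p hp q hq => by rw [hs q hq]; exact hwd.2 p hp
    rw [mul_assoc, norm_mul_of_fst_ne hjoin, toWord_mul_of_fst_ne hjoin,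
      head?_append_of_ne_nil _ (toWord_ne_nil_of_norm_le hw hwd_norm)]
    exact ⟨hwd.1, le_add_right hwd_norm⟩

theorem norm_le_norm_of_mem_closure (hw : w ≠ 1) (hwb : AvoidsAtEnds b w.toWord)
    {g : FreeGroup α} (hg : g ∈ closure {w, of b}) (hgb : g ∉ zpowers (of b)) :
    norm w ≤ norm g := by
  obtain ⟨c, t, ht, rfl⟩ := exists_zpow_mul_isAlternatingProduct hg
  rcases ht.eq_one_or_norm_le hw hwb with rfl | ⟨hhead, hle⟩
  · exact absurd (by simp) hgb
  · rw [norm_mul_of_fst_ne fun p hp q hq => by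
      rw [fst_eq_of_mem_toWord_of_zpow (mem_of_mem_getLast? hp)]; exact (hhead q hq).symm]
    exact le_add_left hle

theorem of_notMem_zpowers_of {a : α} (hab : a ≠ b) : of a ∉ zpowers (of b) := by
  rintro ⟨k, hk : of b ^ k = of a⟩
  exact hab (fst_eq_of_mem_toWord_of_zpow (k := k) (p := (a, true)) (by simp [hk]))

theorem exists_eq_of_zpow_of_toWord_eq_singleton {g : FreeGroup α} {p : α × Bool}
    (h : g.toWord = [p]) : ∃ ε : ℤ, (ε = 1 ∨ ε = -1) ∧ g = of p.1 ^ ε := by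
  obtain ⟨a, s⟩ := p
  rw [← mk_toWord (x := g), h]
  cases s
  · exact ⟨-1, .inr rfl, by rw [zpow_neg_one]; rfl⟩
  · exact ⟨1, .inl rfl, by rw [zpow_one]; rfl⟩

theorem exists_eq_of_zpow_of_of_mem_closure {a : α} {u : FreeGroup α} (hab : a ≠ b)
    (hu : AvoidsAtEnds b u.toWord) (ha : of a ∈ closure {u, of b}) :
    ∃ (c : α) (ε : ℤ), c ≠ b ∧ (ε = 1 ∨ ε = -1) ∧ u = of c ^ ε := by
  have ha' : of a ∉ zpowers (of b) := of_notMem_zpowers_of hab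
  have hu_ne : u ≠ 1 := by
    rintro rfl
    rw [closure_insert_one, ← zpowers_eq_closure] at ha
    exact ha' ha
  have hnorm : norm u ≤ 1 := norm_of a ▸ norm_le_norm_of_mem_closure hu_ne hu ha ha'
  obtain ⟨p, hp⟩ : ∃ p, u.toWord = [p] := length_eq_one_iff.mp <|
    le_antisymm hnorm (Nat.one_le_iff_ne_zero.mpr (mt norm_eq_zero.mp hu_ne))
  obtain ⟨ε, hε, rfl⟩ := exists_eq_of_zpow_of_toWord_eq_singleton hp
  exact ⟨p.1, ε, hu.1 p (by simp [hp]), hε, rfl⟩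

end FreeGroup

theorem stmt0_general (φ : FreeGroup (Fin 2) ≃* FreeGroup (Fin 2)) (ν : ℤ)
    (hy : φ (FreeGroup.of 1) = (FreeGroup.of 1) ^ ν) :
    ∃ (k l ε : ℤ), (ε = 1 ∨ ε = -1) ∧
      φ (FreeGroup.of 0) =
        (FreeGroup.of 1) ^ k * (FreeGroup.of 0) ^ ε * (FreeGroup.of 1) ^ l := by
  obtain ⟨k, l, u, hxu, hu⟩ := exists_zpow_mul_mul_zpow 1 (φ (of 0))
  have hy_mem : of 1 ∈ closure {u, of 1} := subset_closure (Set.mem_insert_of_mem _ rfl)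
  have hgen : closure {u, of 1} = ⊤ := eq_top_of_forall_apply_of_mem φ <| Fin.forall_fin_two.mpr
    ⟨hxu ▸ mul_mem (mul_mem (zpow_mem hy_mem k) (subset_closure (Set.mem_insert _ _)))
      (zpow_mem hy_mem l), hy ▸ zpow_mem hy_mem ν⟩
  obtain ⟨c, ε, hc, hε, rfl⟩ :=
    exists_eq_of_zpow_of_of_mem_closure (a := 0) (by decide) hu (hgen ▸ mem_top _)
  obtain rfl : c = 0 := by omega
  exact ⟨k, l, ε, hε, hxu⟩

/-- If `φ` is an automorphism of the free group on two generators `x, y`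
with `φ y = y^ν` for `ν ∈ {1, -1}`, then `φ x = y^k x^ε y^l` for some integers `k, l`
and `ε ∈ {1, -1}`. -/
theorem stmt0 (φ : FreeGroup (Fin 2) ≃* FreeGroup (Fin 2)) (ν : ℤ)
    (hν : ν = 1 ∨ ν = -1)
    (hy : φ (FreeGroup.of 1) = (FreeGroup.of 1) ^ ν) :
    ∃ (k l ε : ℤ), (ε = 1 ∨ ε = -1) ∧
      φ (FreeGroup.of 0) =
        (FreeGroup.of 1) ^ k * (FreeGroup.of 0) ^ ε * (FreeGroup.of 1) ^ l :=
  stmt0_general φ ν hy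
end

section
/- Let F be the free group on two generators x and y, and let w(s,t) be a freely reduced word in letters s, t. Then w(x, xy) · w(y, xy) = 1 in F if and only if w(s,t) is the trivial word. Equivalently: if f : F⟨s,t⟩ → F⟨x,y⟩ is the homomorphism sending s ↦ x, t ↦ xy, and g : F⟨s,t⟩ → F⟨x,y⟩ is the homomorphism sending s ↦ y, t ↦ xy, then for any element w of F⟨s,t⟩, f(w) · g(w) = 1 implies w = 1. -/
/-!
Write `x = of a`, `y = of b`, `f = lift ![x, xy]`, `g = lift ![y, xy]` and let `σ` swap `x`
and `y`. Then `g w = σ (x⁻¹ (f w) x)`, so `u = f w` with `u * g w = 1` satisfies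
`σ u = y u⁻¹ y⁻¹`, and applying `σ` once more shows that `u` commutes with `xy`. Comparing
the reduced words of `xy * u` and `u * xy` shows that the centralizer of `xy` is generated by `xy`,
so `u = (xy) ^ n`. Then `σ u = (yx) ^ n = (yx) ^ (-n) = (σ u)⁻¹`, hence `u = 1` because free
groups are torsion-free, and `w = 1` because `f` is injective.
-/

theorem List.exists_eq_flatten_replicate_of_cons_cons_eq_append {α : Type*} {a b : α}
    (hab : a ≠ b) : ∀ {L : List α}, a :: b :: L = L ++ [a, b] →
      ∃ k, L = (replicate k [a, b]).flatten
  | [], _ => ⟨0, rfl⟩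
  | [_], h => by simp only [cons_append, nil_append, cons.injEq] at h; exact absurd h.2.1.symm hab
  | c :: d :: M, h => by
    simp only [cons_append, cons.injEq] at h
    obtain ⟨rfl, rfl, h⟩ := h
    obtain ⟨k, rfl⟩ := exists_eq_flatten_replicate_of_cons_cons_eq_append hab h
    exact ⟨k + 1, by simp [replicate_succ]⟩

namespace FreeGroup

variable {α : Type*} [DecidableEq α] {a b : α} {v : FreeGroup α}

theorem toWord_mul_eq_append {x y : FreeGroup α}
    (h : ∀ p ∈ x.toWord.getLast?, ∀ q ∈ y.toWord.head?, p.1 = q.1 → p.2 = q.2) :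
    (x * y).toWord = x.toWord ++ y.toWord := by
  rw [toWord_mul]
  exact IsReduced.reduce_eq (List.isChain_append.2 ⟨isReduced_toWord, isReduced_toWord, h⟩)

theorem toWord_of_mul_of : (of a * of b).toWord = [(a, true), (b, true)] := by
  rw [toWord_mul_eq_append] <;> simp [toWord_of]

theorem toWord_of_mul_of_mul (h : v.toWord.head? ≠ some (b, false)) :
    (of a * of b * v).toWord = (a, true) :: (b, true) :: v.toWord := by
  rw [toWord_mul_eq_append, toWord_of_mul_of]
  · rfl
  rw [toWord_of_mul_of]
  rintro _ ⟨⟩ ⟨c, s⟩ hq (rfl : b = c)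
  cases s
  exacts [absurd hq h, rfl]

theorem toWord_mul_of_mul_of (h : v.toWord.getLast? ≠ some (a, false)) :
    (v * (of a * of b)).toWord = v.toWord ++ [(a, true), (b, true)] := by
  rw [toWord_mul_eq_append, toWord_of_mul_of]
  rw [toWord_of_mul_of]
  rintro ⟨c, s⟩ hp _ ⟨⟩ (rfl : c = a)
  cases s
  exacts [absurd hp h, rfl]

theorem norm_of_mul_of_mul_le (h : v.toWord.head? = some (b, false)) :
    (of a * of b * v).norm ≤ v.norm := by
  obtain ⟨L, hL⟩ := List.head?_eq_some_iff.1 h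
  have hv : v = (of b)⁻¹ * mk L := by rw [← mk_toWord (x := v), hL]; rfl
  calc (of a * of b * v).norm = (of a * mk L).norm := by rw [hv]; group
    _ ≤ (of a).norm + (mk L).norm := norm_mul_le _ _
    _ ≤ 1 + L.length := by rw [norm_of]; exact Nat.add_le_add_left norm_mk_le 1
    _ = v.norm := by simp [norm, hL, add_comm]

theorem norm_mul_of_mul_of_le (h : v.toWord.getLast? = some (a, false)) :
    (v * (of a * of b)).norm ≤ v.norm := by
  obtain ⟨L, hL⟩ := List.getLast?_eq_some_iff.1 h
  have hv : v = mk L * (of a)⁻¹ := by rw [← mk_toWord (x := v), hL]; rfl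
  calc (v * (of a * of b)).norm = (mk L * of b).norm := by rw [hv]; group
    _ ≤ (mk L).norm + (of b).norm := norm_mul_le _ _
    _ ≤ L.length + 1 := by rw [norm_of]; exact Nat.add_le_add_right norm_mk_le 1
    _ = v.norm := by simp [norm, hL]

theorem head?_toWord_inv : v⁻¹.toWord.head? = v.toWord.getLast?.map fun p => (p.1, !p.2) := by
  simp [toWord_inv, invRev, List.getLast?_map]

theorem getLast?_toWord_inv : v⁻¹.toWord.getLast? = v.toWord.head?.map fun p => (p.1, !p.2) := by
  simp [toWord_inv, invRev, List.head?_map]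

theorem exists_zpow_eq_of_commute_of_mul_of (hab : a ≠ b) (hv : Commute (of a * of b) v) :
    ∃ n : ℤ, (of a * of b) ^ n = v := by
  have periodic : ∀ v : FreeGroup α, Commute (of a * of b) v →
      v.toWord.head? ≠ some (b, false) → v.toWord.getLast? ≠ some (a, false) →
      ∃ k : ℕ, (of a * of b) ^ k = v := by
    intro v hv h₁ h₂
    have hL := toWord_of_mul_of_mul (a := a) h₁
    rw [hv.eq, toWord_mul_of_mul_of h₂] at hL
    obtain ⟨k, hk⟩ :=
      List.exists_eq_flatten_replicate_of_cons_cons_eq_append (by simpa using hab) hL.symm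
    exact ⟨k, by rw [← mk_toWord (x := v), hk, ← pow_mk]; rfl⟩
  have head_iff_getLast : ∀ v : FreeGroup α, Commute (of a * of b) v →
      (v.toWord.head? = some (b, false) ↔ v.toWord.getLast? = some (a, false)) := by
    intro v hv
    -- a cancellation on one side only would make `xy * v` and `v * xy` of different lengths
    constructor
    · intro h₁
      by_contra h₂
      have := norm_of_mul_of_mul_le h₁ (a := a)
      rw [hv.eq, norm, toWord_mul_of_mul_of h₂] at this
      simp [norm] at this
    · intro h₂
      by_contra h₁
      have := norm_mul_of_mul_of_le h₂ (b := b)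
      rw [← hv.eq, norm, toWord_of_mul_of_mul h₁] at this
      simp [norm] at this
  by_cases h : v.toWord.head? = some (b, false)
  · obtain ⟨k, hk⟩ := periodic v⁻¹ hv.inv_right
      (by rw [head?_toWord_inv, (head_iff_getLast v hv).1 h]; simp)
      (by rw [getLast?_toWord_inv, h]; simp [hab.symm])
    exact ⟨-k, by rw [zpow_neg, zpow_natCast, hk, inv_inv]⟩
  · obtain ⟨k, hk⟩ := periodic v hv h (mt (head_iff_getLast v hv).2 h)
    exact ⟨k, by rw [zpow_natCast, hk]⟩

theorem eq_one_of_map_swap_conj_eq_inv (hab : a ≠ b) {u : FreeGroup α}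
    (h : map (Equiv.swap a b) ((of a)⁻¹ * u * of a) = u⁻¹) : u = 1 := by
  set σ := map (Equiv.swap a b)
  have σ_a : σ (of a) = of b := by simp [σ]
  have σ_b : σ (of b) = of a := by simp [σ]
  have σ_σ (z : FreeGroup α) : σ (σ z) = z := by simp [σ, map.comp, Function.comp_def]
  have hσu : σ u = of b * u⁻¹ * (of b)⁻¹ := by
    rw [_root_.map_mul, _root_.map_mul, _root_.map_inv, σ_a] at h
    rw [← h]; group
  have hcomm : Commute (of a * of b) u := by
    have hu := congrArg σ hσu
    rw [σ_σ, _root_.map_mul, _root_.map_mul, _root_.map_inv, _root_.map_inv, σ_b, hσu] at hu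
    rw [Commute, SemiconjBy]
    conv_rhs => rw [hu]
    group
  obtain ⟨n, rfl⟩ := exists_zpow_eq_of_commute_of_mul_of hab hcomm
  have hσu_inv : σ ((of a * of b) ^ n) = (σ ((of a * of b) ^ n))⁻¹ := by
    calc σ ((of a * of b) ^ n) = (of b * of a) ^ n := by
          rw [_root_.map_zpow, _root_.map_mul, σ_a, σ_b]
      _ = (of b * (of a * of b) * (of b)⁻¹) ^ n := by group
      _ = (σ ((of a * of b) ^ n))⁻¹ := by rw [conj_zpow, hσu, ← zpow_neg]; group
  have hσu_one : σ ((of a * of b) ^ n) = 1 := by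
    have := mul_eq_one_iff_eq_inv.2 hσu_inv
    rwa [← sq, pow_eq_one_iff, or_iff_left two_ne_zero] at this
  rw [← σ_σ ((of a * of b) ^ n), hσu_one, _root_.map_one]

theorem lift_of_of_mul_injective (hab : a ≠ b) :
    Function.Injective (lift ![of a, of a * of b] : FreeGroup (Fin 2) →* FreeGroup α) := by
  let r : FreeGroup α →* FreeGroup (Fin 2) :=
    lift fun c => if c = a then of 0 else if c = b then (of 0)⁻¹ * of 1 else 1
  have hr : r.comp (lift ![of a, of a * of b]) = MonoidHom.id _ := by
    ext i
    fin_cases i <;> simp [r, hab.symm]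
  exact Function.LeftInverse.injective (g := r) (DFunLike.congr_fun hr)

theorem lift_eq_map_swap_conj (w : FreeGroup (Fin 2)) :
    lift ![of b, of a * of b] w =
      map (Equiv.swap a b) ((of a)⁻¹ * lift ![of a, of a * of b] w * of a) := by
  have h : (lift ![of b, of a * of b] : FreeGroup (Fin 2) →* FreeGroup α) =
      (map (Equiv.swap a b)).comp
        ((MulAut.conj (of a)⁻¹).toMonoidHom.comp (lift ![of a, of a * of b])) := by
    ext i
    fin_cases i <;> simp
  rw [h]
  simp

theorem lift_mul_lift_eq_one_iff (hab : a ≠ b) (w : FreeGroup (Fin 2)) :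
    lift ![of a, of a * of b] w * lift ![of b, of a * of b] w = 1 ↔ w = 1 := by
  refine ⟨fun h => lift_of_of_mul_injective hab ?_, fun h => by simp [h]⟩
  rw [_root_.map_one]
  refine eq_one_of_map_swap_conj_eq_inv hab ?_
  rw [← lift_eq_map_swap_conj]
  exact eq_inv_of_mul_eq_one_right h

end FreeGroup

/-- In the free group on `x = of 0`, `y = of 1`, if `f` sends `s ↦ x, t ↦ xy`
and `g` sends `s ↦ y, t ↦ xy`, then for any word `w`, `f w * g w = 1` iff `w = 1`. -/
theorem stmt1 (w : FreeGroup (Fin 2)) :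
    (FreeGroup.lift ![FreeGroup.of 0, FreeGroup.of 0 * FreeGroup.of 1]) w *
      (FreeGroup.lift ![FreeGroup.of 1, FreeGroup.of 0 * FreeGroup.of 1]) w = 1 ↔
    w = 1 :=
  FreeGroup.lift_mul_lift_eq_one_iff zero_ne_one w
end

section
/- Every automorphism φ of the free product C₂ ⋆ C_m (with m ≥ 3), presented as ⟨u, v | u² = vᵐ = 1⟩, is of the form φ = ν_r ∘ ι_g for some g in the group and some r ∈ {1, ..., m-1} coprime to m, where ν_r is the automorphism with ν_r(u) = u, ν_r(v) = v^r, and ι_g is conjugation by g. -/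
/-- Relators for the free product `C₂ ⋆ C_m = ⟨u, v | u² = vᵐ = 1⟩`,
with `u = of 0`, `v = of 1`. -/
def relC2Cm (m : ℕ) : Set (FreeGroup (Fin 2)) :=
  {FreeGroup.of 0 ^ 2, FreeGroup.of 1 ^ m}

/-!
We realise the group as the free product `CoprodI` of `ZMod 2` and `ZMod m` and argue with
reduced words. A finite-order element of a free product is conjugate into a factor, because a
cyclically reduced word of length at least two has infinite order. Hence `φ u = a u a⁻¹` (were it
conjugate into `C_m`, the projection onto `C₂` would kill the image of `φ`) and `φ v = b vʳ b⁻¹`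
with `vʳ` of order `m`, i.e. `r` coprime to `m`.

Then `u` and `c vʳ c⁻¹` generate the group, where `c = a⁻¹ b`, and this forces `c ∈ C₂ C_m`:
after absorbing a leading `C₂`-letter and a trailing `C_m`-letter, `c` would otherwise be a
reduced word starting in `C_m` and ending in `C₂`. For such `c` the reduced words of `u` and of
the `c vʲ c⁻¹` concatenate without cancellation, so no product of them is the single letter `v`.
As both factors are abelian, `g = a x` works for `c = x y`.
-/

open Monoid CoprodI Multiplicative

namespace Monoid.CoprodI

variable {ι : Type*} {M : ι → Type*} [∀ i, Group (M i)]

lemma of_mul_of_mul_inv_of {i : ι} {x y : M i} (h : Commute x y) :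
    of x * of y * (of x)⁻¹ = of y := by
  rw [← map_inv, ← map_mul, ← map_mul, h.eq, mul_inv_cancel_right]

def listProd (l : List (Σ i, M i)) : CoprodI M :=
  (l.map fun x => of x.2).prod

def IsReduced (l : List (Σ i, M i)) : Prop :=
  (∀ x ∈ l, x.2 ≠ 1) ∧ l.IsChain fun a b => a.1 ≠ b.1

def invRev (l : List (Σ i, M i)) : List (Σ i, M i) :=
  (l.map fun x => ⟨x.1, x.2⁻¹⟩).reverse

@[simp] lemma listProd_nil : listProd ([] : List (Σ i, M i)) = 1 := rfl

@[simp] lemma listProd_cons (x : Σ i, M i) (l : List (Σ i, M i)) :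
    listProd (x :: l) = of x.2 * listProd l := by
  simp [listProd]

@[simp] lemma listProd_append (l₁ l₂ : List (Σ i, M i)) :
    listProd (l₁ ++ l₂) = listProd l₁ * listProd l₂ := by
  simp [listProd]

lemma listProd_singleton (x : Σ i, M i) : listProd [x] = of x.2 := by
  simp

lemma listProd_flatten (L : List (List (Σ i, M i))) :
    listProd L.flatten = (L.map listProd).prod := by
  induction L with
  | nil => rfl
  | cons l L ih => simp [ih]

@[simp] lemma listProd_invRev (l : List (Σ i, M i)) : listProd (invRev l) = (listProd l)⁻¹ := by
  induction l with
  | nil => simp [invRev]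
  | cons x l ih => simp_all [invRev, listProd]

@[simp] lemma length_invRev (l : List (Σ i, M i)) : (invRev l).length = l.length := by
  simp [invRev]

lemma head?_invRev (l : List (Σ i, M i)) :
    (invRev l).head? = l.getLast?.map fun x => ⟨x.1, x.2⁻¹⟩ := by
  rw [invRev, List.head?_reverse, List.getLast?_map]

lemma getLast?_invRev (l : List (Σ i, M i)) :
    (invRev l).getLast? = l.head?.map fun x => ⟨x.1, x.2⁻¹⟩ := by
  rw [invRev, List.getLast?_reverse, List.head?_map]

namespace IsReduced

lemma nil : IsReduced ([] : List (Σ i, M i)) := ⟨by simp, List.isChain_nil⟩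

lemma singleton {x : Σ i, M i} (hx : x.2 ≠ 1) : IsReduced [x] :=
  ⟨by simpa using hx, List.isChain_singleton _⟩

lemma isPrefix {l₁ l₂ : List (Σ i, M i)} (h : IsReduced l₂) (hs : l₁.IsPrefix l₂) :
    IsReduced l₁ :=
  ⟨fun x hx => h.1 x (hs.sublist.mem hx), h.2.prefix hs⟩

lemma isSuffix {l₁ l₂ : List (Σ i, M i)} (h : IsReduced l₂) (hs : l₁.IsSuffix l₂) :
    IsReduced l₁ :=
  ⟨fun x hx => h.1 x (hs.sublist.mem hx), h.2.suffix hs⟩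

lemma append {l₁ l₂ : List (Σ i, M i)} (h₁ : IsReduced l₁) (h₂ : IsReduced l₂)
    (h : ∀ a ∈ l₁.getLast?, ∀ b ∈ l₂.head?, a.1 ≠ b.1) : IsReduced (l₁ ++ l₂) :=
  ⟨by simpa [or_imp, forall_and] using And.intro h₁.1 h₂.1, h₁.2.append h₂.2 h⟩

lemma invRev {l : List (Σ i, M i)} (h : IsReduced l) : IsReduced (invRev l) := by
  refine ⟨?_, ?_⟩
  · simp only [CoprodI.invRev, List.mem_reverse, List.mem_map]
    rintro _ ⟨x, hx, rfl⟩
    simpa using h.1 x hx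
  · rw [CoprodI.invRev, List.isChain_reverse, List.isChain_map]
    exact h.2.imp fun _ _ hab e => hab e.symm

lemma flatten {L : List (List (Σ i, M i))} (hL : ∀ l ∈ L, IsReduced l ∧ l ≠ [])
    (hchain : L.IsChain fun l₁ l₂ => ∀ a ∈ l₁.getLast?, ∀ b ∈ l₂.head?, a.1 ≠ b.1) :
    IsReduced L.flatten := by
  induction L with
  | nil => exact nil
  | cons l L ih =>
    rw [List.flatten_cons]
    refine (hL l List.mem_cons_self).1.append
      (ih (fun l' hl' => hL l' (List.mem_cons_of_mem _ hl')) hchain.tail) ?_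
    rcases L with _ | ⟨l', L⟩
    · simp
    · rw [List.flatten_cons, List.head?_append_of_ne_nil _ (hL l' (by simp)).2]
      exact (List.isChain_cons_cons.mp hchain).1

lemma exists_isReduced_listProd_eq_mul_of {l : List (Σ i, M i)} (hl : IsReduced l) {i : ι}
    (hlast : ∀ a ∈ l.getLast?, a.1 ≠ i) (y : M i) :
    ∃ l', IsReduced l' ∧ l'.length ≤ l.length + 1 ∧ listProd l' = listProd l * of y := by
  by_cases hy : y = 1
  · exact ⟨l, hl, by omega, by simp [hy]⟩
  · refine ⟨l ++ [⟨i, y⟩], hl.append (.singleton hy) (by simpa using hlast), by simp, ?_⟩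
    simp

lemma exists_listProd_eq_of_mul_head_ne {l : List (Σ i, M i)} (hl : IsReduced l) (i : ι) :
    ∃ (a : M i) (l' : List (Σ i, M i)), IsReduced l' ∧ (∀ x ∈ l'.head?, x.1 ≠ i) ∧
      (∀ x ∈ l'.getLast?, x ∈ l.getLast?) ∧ listProd l = of a * listProd l' := by
  rcases l with _ | ⟨⟨k, a⟩, t⟩
  · exact ⟨1, [], nil, by simp, by simp, by simp⟩
  by_cases hk : k = i
  · subst hk
    refine ⟨a, t, hl.isSuffix (List.suffix_cons _ _),
      fun x hx => ((List.isChain_cons.mp hl.2).1 x hx).symm, fun x hx => ?_, by simp⟩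
    simp [List.getLast?_cons, Option.mem_def.mp hx]
  · exact ⟨1, _, hl, by simpa using hk, by simp, by simp⟩

lemma exists_listProd_eq_mul_of_getLast_ne {l : List (Σ i, M i)} (hl : IsReduced l) (j : ι) :
    ∃ (b : M j) (l' : List (Σ i, M i)), IsReduced l' ∧ (∀ x ∈ l'.getLast?, x.1 ≠ j) ∧
      (∀ x ∈ l'.head?, x ∈ l.head?) ∧ listProd l = listProd l' * of b := by
  obtain rfl | ⟨t, ⟨k, b⟩, rfl⟩ := l.eq_nil_or_concat'
  · exact ⟨1, [], nil, by simp, by simp, by simp⟩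
  by_cases hk : k = j
  · subst hk
    refine ⟨b, t, hl.isPrefix (List.prefix_append _ _),
      fun x hx => (List.isChain_append.mp hl.2).2.2 x hx ⟨k, b⟩ (by simp), fun x hx => ?_, by simp⟩
    simp [Option.mem_def.mp hx]
  · exact ⟨1, _, hl, by simpa using hk, by simp, by simp⟩

end IsReduced

variable [DecidableEq ι]

def conjFactor (j : ι) (c : CoprodI M) : CoprodI M →* CoprodI M :=
  lift fun k => (MulAut.conj ((Pi.mulSingle j c : ι → CoprodI M) k)).toMonoidHom.comp of

@[simp] lemma conjFactor_of_self (j : ι) (c : CoprodI M) (y : M j) :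
    conjFactor j c (of y) = c * of y * c⁻¹ := by
  simp [conjFactor]

lemma conjFactor_of_of_ne {j k : ι} (h : k ≠ j) (c : CoprodI M) (x : M k) :
    conjFactor j c (of x) = of x := by
  simp [conjFactor, Pi.mulSingle_eq_of_ne h]

lemma surjective_conjFactor_of_mul {i j : ι} (hij : i ≠ j) (a : M i) (b : M j) {c : CoprodI M}
    (h : Function.Surjective (conjFactor j (of a * c * of b))) :
    Function.Surjective (conjFactor j c) := by
  have hle : ∀ z, conjFactor j (of a * c * of b) z ∈
      (conjFactor j c).range.map (MulAut.conj (of a)).toMonoidHom := by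
    intro z
    induction z using CoprodI.induction_on with
    | one => exact one_mem _
    | of k x =>
      rw [Subgroup.mem_map]
      by_cases hk : k = j
      · subst hk
        refine ⟨_, ⟨of (b * x * b⁻¹), rfl⟩, ?_⟩
        rw [MulEquiv.toMonoidHom_eq_coe, MonoidHom.coe_coe, MulAut.conj_apply, conjFactor_of_self,
          conjFactor_of_self, map_mul, map_mul, map_inv]
        group
      · refine ⟨_, ⟨(of a)⁻¹ * of x * of a, rfl⟩, ?_⟩
        simp [conjFactor_of_of_ne hk, conjFactor_of_of_ne hij, mul_assoc]
    | mul x y hx hy => exact map_mul (conjFactor j _) x y ▸ mul_mem hx hy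
  intro z
  obtain ⟨w, hw⟩ := h (of a * z * (of a)⁻¹)
  obtain ⟨t, ht, hz⟩ := Subgroup.mem_map.mp (hw ▸ hle w)
  obtain rfl : t = z := (MulAut.conj (of a)).injective hz
  exact ht

section conjFactorPiece

variable {j : ι} {lc : List (Σ i, M i)}

/-- The reduced word of `conjFactor j c (of x)` when `lc` is the reduced word of `c`, provided
`lc` starts in the factor `j` and does not end in it. -/
def conjFactorPiece (j : ι) (lc : List (Σ i, M i)) (x : Σ i, M i) : List (Σ i, M i) :=
  if x.1 = j then lc ++ x :: invRev lc else [x]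

lemma conjFactor_listProd (j : ι) (lc l : List (Σ i, M i)) :
    conjFactor j (listProd lc) (listProd l) = listProd (l.flatMap (conjFactorPiece j lc)) := by
  induction l with
  | nil => simp
  | cons x l ih =>
    obtain ⟨k, y⟩ := x
    rw [listProd_cons, map_mul, ih, List.flatMap_cons, listProd_append]
    by_cases hk : k = j
    · subst hk
      simp [conjFactorPiece, mul_assoc]
    · simp [conjFactorPiece, hk, conjFactor_of_of_ne hk]

lemma conjFactorPiece_ne_nil (x : Σ i, M i) : conjFactorPiece j lc x ≠ [] := by
  unfold conjFactorPiece
  split_ifs <;> simp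

lemma head?_conjFactorPiece (hhead : ∀ a ∈ lc.head?, a.1 = j) (x : Σ i, M i) :
    ∀ a ∈ (conjFactorPiece j lc x).head?, a.1 = x.1 := by
  unfold conjFactorPiece
  split_ifs with hx
  · rcases lc with _ | ⟨c, lc⟩
    · simp
    · simpa [hx] using hhead c
  · simp

lemma getLast?_conjFactorPiece (hhead : ∀ a ∈ lc.head?, a.1 = j) (x : Σ i, M i) :
    ∀ a ∈ (conjFactorPiece j lc x).getLast?, a.1 = x.1 := by
  unfold conjFactorPiece
  split_ifs with hx
  · rw [← List.singleton_append, ← List.append_assoc, List.getLast?_append, getLast?_invRev]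
    rcases lc with _ | ⟨c, lc⟩
    · simp
    · simpa [hx] using hhead c
  · simp

lemma isReduced_conjFactorPiece (hlc : IsReduced lc) (hlast : ∀ a ∈ lc.getLast?, a.1 ≠ j)
    {x : Σ i, M i} (hx : x.2 ≠ 1) : IsReduced (conjFactorPiece j lc x) := by
  unfold conjFactorPiece
  split_ifs with hxj
  · rw [← List.singleton_append]
    refine hlc.append ((IsReduced.singleton hx).append hlc.invRev fun a ha b hb => ?_)
      fun c hc b hb => ?_
    · rw [List.getLast?_singleton, Option.mem_some_iff] at ha
      rw [head?_invRev, Option.mem_map] at hb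
      obtain ⟨c, hc, rfl⟩ := hb
      exact ha ▸ hxj ▸ (hlast c hc).symm
    · rw [List.head?_append, List.head?_singleton, Option.some_or, Option.mem_some_iff] at hb
      exact hb ▸ hxj ▸ hlast c hc
  · exact .singleton hx

lemma isReduced_flatMap_conjFactorPiece (hlc : IsReduced lc) (hhead : ∀ a ∈ lc.head?, a.1 = j)
    (hlast : ∀ a ∈ lc.getLast?, a.1 ≠ j) {l : List (Σ i, M i)} (hl : IsReduced l) :
    IsReduced (l.flatMap (conjFactorPiece j lc)) := by
  refine IsReduced.flatten ?_ ?_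
  · simp only [List.mem_map]
    rintro _ ⟨x, hx, rfl⟩
    exact ⟨isReduced_conjFactorPiece hlc hlast (hl.1 x hx), conjFactorPiece_ne_nil x⟩
  · refine (List.isChain_map _).mpr (hl.2.imp fun {x y} hxy a ha b hb => ?_)
    rw [getLast?_conjFactorPiece hhead x a ha, head?_conjFactorPiece hhead y b hb]
    exact hxy

end conjFactorPiece

variable [∀ i, DecidableEq (M i)]

lemma IsReduced.eq_of_listProd_eq {l₁ l₂ : List (Σ i, M i)} (h₁ : IsReduced l₁)
    (h₂ : IsReduced l₂) (h : listProd l₁ = listProd l₂) : l₁ = l₂ :=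
  congrArg Word.toList <|
    Word.equiv.symm.injective (a₁ := ⟨l₁, h₁.1, h₁.2⟩) (a₂ := ⟨l₂, h₂.1, h₂.2⟩) h

lemma exists_isReduced_listProd_eq (x : CoprodI M) :
    ∃ l : List (Σ i, M i), IsReduced l ∧ listProd l = x :=
  ⟨(Word.equiv x).toList, ⟨(Word.equiv x).ne_one, (Word.equiv x).chain_ne⟩,
    Word.equiv.symm_apply_apply x⟩

lemma IsReduced.listProd_ne_one {l : List (Σ i, M i)} (h : IsReduced l) (hne : l ≠ []) :
    listProd l ≠ 1 :=
  fun h1 => hne (h.eq_of_listProd_eq .nil h1)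

lemma IsReduced.not_isOfFinOrder {l : List (Σ i, M i)} (hl : IsReduced l) (hne : l ≠ [])
    (hcyc : ∀ a ∈ l.getLast?, ∀ b ∈ l.head?, a.1 ≠ b.1) : ¬IsOfFinOrder (listProd l) := by
  rw [isOfFinOrder_iff_pow_eq_one]
  rintro ⟨n, hn, hpow⟩
  have hred : IsReduced (List.replicate n l).flatten :=
    IsReduced.flatten (by simp [hl, hne]) (List.isChain_replicate_of_rel n hcyc)
  refine hred.listProd_ne_one (by simp [hne, hn.ne']) ?_
  rw [listProd_flatten, List.map_replicate, List.prod_replicate, hpow]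

theorem exists_conj_of_isOfFinOrder [Nonempty ι] {x : CoprodI M} (hx : IsOfFinOrder x) :
    ∃ (g : CoprodI M) (i : ι) (y : M i), x = g * of y * g⁻¹ := by
  obtain ⟨l, hl, rfl⟩ := exists_isReduced_listProd_eq x
  induction hlen : l.length using Nat.strong_induction_on generalizing l with
  | _ n ih =>
  rcases l with _ | ⟨⟨i, a⟩, t⟩
  · exact ⟨1, Classical.arbitrary ι, 1, by simp⟩
  obtain rfl | ⟨mid, ⟨j, b⟩, rfl⟩ := t.eq_nil_or_concat'
  · exact ⟨1, i, a, by simp⟩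
  obtain rfl | hij := eq_or_ne i j
  · -- conjugating by the first letter merges it into the last one and shortens the word
    have hmid : ∀ c ∈ mid.getLast?, c.1 ≠ i := by
      simpa using (List.isChain_append.mp hl.2.tail).2.2
    obtain ⟨l', hl', hlen', hprod⟩ :=
      (hl.isSuffix (List.suffix_cons _ _)).isPrefix (List.prefix_append _ _)
        |>.exists_isReduced_listProd_eq_mul_of hmid (b * a)
    have hconj : listProd l' = (of a)⁻¹ * listProd (⟨i, a⟩ :: (mid ++ [⟨i, b⟩])) * of a := by
      simp [hprod, mul_assoc]
    obtain ⟨g, k, y, hg⟩ := ih l'.length (by simp at hlen; omega) l' hl'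
      (by rw [hconj]; exact (isConj_iff.mpr ⟨(of a)⁻¹, by rw [inv_inv]⟩).isOfFinOrder hx) rfl
    refine ⟨of a * g, k, y, ?_⟩
    rw [hconj, mul_assoc, inv_mul_eq_iff_eq_mul, ← eq_mul_inv_iff_mul_eq] at hg
    rw [hg]
    group
  · refine absurd hx (hl.not_isOfFinOrder (by simp) ?_)
    rw [← List.cons_append, List.getLast?_concat]
    simpa using hij.symm

lemma of_notMem_range_conjFactor {j : ι} {lc : List (Σ i, M i)} (hlc : IsReduced lc)
    (hne : lc ≠ []) (hhead : ∀ a ∈ lc.head?, a.1 = j) (hlast : ∀ a ∈ lc.getLast?, a.1 ≠ j)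
    {y : M j} (hy : y ≠ 1) : of y ∉ (conjFactor j (listProd lc)).range := by
  rintro ⟨z, hz⟩
  obtain ⟨l, hl, rfl⟩ := exists_isReduced_listProd_eq z
  rw [conjFactor_listProd, ← listProd_singleton ⟨j, y⟩] at hz
  have hsingle := (isReduced_flatMap_conjFactorPiece hlc hhead hlast hl).eq_of_listProd_eq
    (.singleton (x := ⟨j, y⟩) hy) hz
  rcases l with _ | ⟨x, t⟩
  · simp at hsingle
  rw [List.flatMap_cons] at hsingle
  have hxj : x.1 = j := by
    have h := congrArg List.head? hsingle
    rw [List.head?_append_of_ne_nil _ (conjFactorPiece_ne_nil x)] at h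
    exact (head?_conjFactorPiece hhead x _ h).symm
  have hlen := congrArg List.length hsingle
  simp only [conjFactorPiece, hxj, if_true, List.length_append, List.length_cons,
    length_invRev, List.length_nil] at hlen
  exact hne (List.length_eq_zero_iff.mp (by omega))

end Monoid.CoprodI

theorem Monoid.CoprodI.exists_eq_of_mul_of_of_surjective_conjFactor {M : Fin 2 → Type*}
    [∀ i, Group (M i)] [∀ i, DecidableEq (M i)] {c : CoprodI M}
    (h : Function.Surjective (conjFactor 1 c)) : ∃ (a : M 0) (b : M 1), c = of a * of b := by
  obtain ⟨l, hl, rfl⟩ := exists_isReduced_listProd_eq c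
  obtain ⟨b, l₁, hl₁, hlast₁, -, hb⟩ := hl.exists_listProd_eq_mul_of_getLast_ne 1
  obtain ⟨a, l₂, hl₂, hhead₂, hlast₂, ha⟩ := hl₁.exists_listProd_eq_of_mul_head_ne 0
  rw [hb, ha] at h ⊢
  rcases l₂ with _ | ⟨⟨k, y⟩, t⟩
  · exact ⟨a, b, by simp⟩
  obtain rfl : k = 1 := Fin.eq_one_of_ne_zero k (hhead₂ _ rfl)
  refine absurd (MonoidHom.mem_range.mpr (surjective_conjFactor_of_mul zero_ne_one a b h (of y)))
    (of_notMem_range_conjFactor hl₂ (List.cons_ne_nil _ _) (by simp)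
      (fun x hx => hlast₁ x (hlast₂ x hx)) (hl₂.1 _ List.mem_cons_self))

section CyclicFactors

variable {P : Type*} [Group P] {k : ℕ}

def zmodPowHom {x : P} (hx : x ^ k = 1) : Multiplicative (ZMod k) →* P :=
  AddMonoidHom.toMultiplicativeLeft
    (ZMod.lift k ⟨zmultiplesHom (Additive P) (Additive.ofMul x), by simpa [← ofMul_pow] using hx⟩)

@[simp] lemma zmodPowHom_ofAdd_one {x : P} (hx : x ^ k = 1) :
    zmodPowHom hx (ofAdd (1 : ZMod k)) = x := by
  simp only [zmodPowHom, AddMonoidHom.toMultiplicativeLeft_apply_apply, toAdd_ofAdd]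
  rw [← Int.cast_one, ZMod.lift_coe]
  simp

lemma ofAdd_one_zpow_surjective :
    Function.Surjective fun z : ℤ => ofAdd (1 : ZMod k) ^ z := by
  intro y
  obtain ⟨z, hz⟩ := ZMod.intCast_surjective (toAdd y)
  exact ⟨z, show ofAdd 1 ^ z = y by rw [← ofAdd_zsmul, zsmul_one, hz, ofAdd_toAdd]⟩

lemma monoidHom_ext_zmod {f g : Multiplicative (ZMod k) →* P} (h : f (ofAdd 1) = g (ofAdd 1)) :
    f = g := by
  refine MonoidHom.ext fun y => ?_
  obtain ⟨z, rfl⟩ := ofAdd_one_zpow_surjective y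
  rw [map_zpow, map_zpow, h]

lemma exists_coprime_ofAdd_one_pow_eq [NeZero k] {y : Multiplicative (ZMod k)}
    (hy : orderOf y = k) : ∃ r, r < k ∧ r.Coprime k ∧ ofAdd 1 ^ r = y := by
  refine ⟨(toAdd y).val, ZMod.val_lt _, ?_, ?_⟩
  · have h := ZMod.addOrderOf_coe (toAdd y).val (NeZero.ne k)
    rw [ZMod.natCast_zmod_val, ← orderOf_ofAdd_eq_addOrderOf, ofAdd_toAdd, hy] at h
    rw [Nat.coprime_comm, Nat.Coprime]
    exact (Nat.div_eq_self.mp h.symm).resolve_left (NeZero.ne k)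
  · rw [← ofAdd_nsmul, nsmul_one, ZMod.natCast_zmod_val, ofAdd_toAdd]

lemma eq_ofAdd_one_of_ne_one_zmod_two : ∀ {y : Multiplicative (ZMod 2)}, y ≠ 1 → y = ofAdd 1 := by
  decide

lemma sq_eq_one_zmod_two : ∀ y : Multiplicative (ZMod 2), y ^ 2 = 1 := by
  decide

variable {ι : Type*} (n : ι → ℕ)

lemma presentedGroup_of_pow_eq_one (i : ι) :
    (PresentedGroup.of i : PresentedGroup (Set.range fun i => FreeGroup.of i ^ n i)) ^ n i = 1 := by
  rw [PresentedGroup.of, ← map_pow]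
  exact PresentedGroup.one_of_mem ⟨i, rfl⟩

def presentedGroupEquivCoprodI :
    PresentedGroup (Set.range fun i => FreeGroup.of i ^ n i) ≃*
      CoprodI fun i => Multiplicative (ZMod (n i)) :=
  MonoidHom.toMulEquiv
    (PresentedGroup.toGroup (f := fun i => of (M := fun i => Multiplicative (ZMod (n i))) (ofAdd 1))
      (by
        rintro _ ⟨i, rfl⟩
        rw [map_pow, FreeGroup.lift_apply_of, ← map_pow, ← ofAdd_nsmul, nsmul_one,
          ZMod.natCast_self, ofAdd_zero, map_one]))
    (lift fun i => zmodPowHom (presentedGroup_of_pow_eq_one n i))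
    (PresentedGroup.ext fun i => by simp)
    (ext_hom _ _ fun i => monoidHom_ext_zmod (by simp))

@[simp] lemma presentedGroupEquivCoprodI_of (i : ι) :
    presentedGroupEquivCoprodI n (PresentedGroup.of i) =
      of (M := fun i => Multiplicative (ZMod (n i))) (i := i) (ofAdd 1) := by
  simp [presentedGroupEquivCoprodI]

end CyclicFactors

abbrev C2Cm.Factor (m : ℕ) (i : Fin 2) : Type := Multiplicative (ZMod (![2, m] i))

abbrev C2Cm (m : ℕ) : Type := CoprodI (C2Cm.Factor m)

namespace C2Cm

variable {m : ℕ}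

def u : C2Cm m := of (i := 0) (ofAdd 1)

def v : C2Cm m := of (i := 1) (ofAdd 1)

lemma closure_u_v : Subgroup.closure {u, v} = (⊤ : Subgroup (C2Cm m)) := by
  rw [eq_top_iff]
  rintro x -
  induction x using CoprodI.induction_on with
  | one => exact one_mem _
  | of i y =>
    obtain ⟨z, rfl⟩ := ofAdd_one_zpow_surjective y
    rw [map_zpow]
    refine zpow_mem (Subgroup.subset_closure ?_) z
    fin_cases i <;> simp [u, v]
  | mul x y hx hy => exact mul_mem hx hy

lemma conjFactor_u (c : C2Cm m) : conjFactor 1 c u = u :=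
  conjFactor_of_of_ne zero_ne_one c _

lemma u_sq : (u : C2Cm m) ^ 2 = 1 := by
  rw [u, ← map_pow, show (ofAdd 1 : Factor m 0) ^ 2 = 1 from sq_eq_one_zmod_two _, map_one]

lemma u_ne_one : (u : C2Cm m) ≠ 1 :=
  (map_ne_one_iff _ (of_injective 0)).mpr (show ofAdd (1 : ZMod 2) ≠ 1 by decide)

lemma orderOf_v : orderOf (v : C2Cm m) = m := by
  rw [v, orderOf_injective _ (of_injective 1), orderOf_ofAdd_eq_addOrderOf]
  exact ZMod.addOrderOf_one m

lemma exists_conj_v (hm : 3 ≤ m) (Φ : C2Cm m ≃* C2Cm m) :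
    ∃ (b : C2Cm m) (ν : Factor m 1), orderOf ν = m ∧ Φ v = b * of ν * b⁻¹ := by
  have hΦv : orderOf (Φ v) = m := by rw [MulEquiv.orderOf_eq, orderOf_v]
  obtain ⟨b, k, ν, hb⟩ :=
    exists_conj_of_isOfFinOrder (orderOf_pos_iff.mp (by omega : 0 < orderOf (Φ v)))
  have hν : orderOf ν = m :=
    calc orderOf ν = orderOf (of ν : C2Cm m) :=
          (orderOf_injective (of (M := Factor m)) (of_injective k) ν).symm
      _ = orderOf (MulAut.conj b (of ν)) := (MulEquiv.orderOf_eq _ _).symm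
      _ = m := by rw [MulAut.conj_apply, ← hb, hΦv]
  fin_cases k
  · have := Nat.le_of_dvd two_pos (hν ▸ orderOf_dvd_of_pow_eq_one (sq_eq_one_zmod_two ν))
    omega
  · exact ⟨b, ν, hν, hb⟩

lemma exists_conj_u (hm : 3 ≤ m) (Φ : C2Cm m ≃* C2Cm m) : ∃ a : C2Cm m, Φ u = a * u * a⁻¹ := by
  obtain ⟨a, k, y, ha⟩ := exists_conj_of_isOfFinOrder
    (isOfFinOrder_iff_pow_eq_one.mpr ⟨2, two_pos, by rw [← map_pow, u_sq, map_one]⟩ :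
      IsOfFinOrder (Φ u))
  have hy : y ≠ 1 := by
    rintro rfl
    exact u_ne_one (Φ.map_eq_one_iff.mp (by simpa using ha))
  fin_cases k
  · exact ⟨a, by rw [ha, eq_ofAdd_one_of_ne_one_zmod_two hy]; rfl⟩
  · exfalso
    obtain ⟨b, ν, -, hb⟩ := exists_conj_v hm Φ
    let π : C2Cm m →* Factor m 0 := lift (Pi.mulSingle 0 (MonoidHom.id _))
    have hπ : π.comp Φ.toMonoidHom = 1 := by
      refine MonoidHom.eq_of_eqOn_dense closure_u_v ?_
      rintro _ (rfl | rfl) <;> simp [π, ha, hb]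
    have := DFunLike.congr_fun hπ (Φ.symm u)
    simp only [π, MonoidHom.comp_apply, MulEquiv.coe_toMonoidHom, MulEquiv.apply_symm_apply, u,
      lift_of, Pi.mulSingle_eq_same, MonoidHom.id_apply, MonoidHom.one_apply] at this
    exact absurd this (show ofAdd (1 : ZMod 2) ≠ 1 by decide)

lemma surjective_conjFactor_inv_mul (Φ : C2Cm m ≃* C2Cm m) {a b : C2Cm m} {ν : Factor m 1}
    (ha : Φ u = a * u * a⁻¹) (hb : Φ v = b * of ν * b⁻¹) :
    Function.Surjective (conjFactor 1 (a⁻¹ * b)) := by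
  let Ψ := Φ.trans (MulAut.conj a⁻¹)
  rw [← MonoidHom.range_eq_top, eq_top_iff, ← (MonoidHom.range_eq_top (f := Ψ.toMonoidHom)).mpr
    Ψ.surjective, MonoidHom.range_eq_map, ← closure_u_v, MonoidHom.map_closure,
    Subgroup.closure_le, Set.image_pair]
  rintro _ (rfl | rfl)
  · exact ⟨u, show _ = a⁻¹ * Φ u * a⁻¹⁻¹ by rw [conjFactor_u, ha]; group⟩
  · exact ⟨of ν, show _ = a⁻¹ * Φ v * a⁻¹⁻¹ by rw [conjFactor_of_self, hb]; group⟩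

theorem exists_conj_pow_of_mulEquiv (hm : 3 ≤ m) (Φ : C2Cm m ≃* C2Cm m) :
    ∃ (r : ℕ) (g : C2Cm m), 1 ≤ r ∧ r ≤ m - 1 ∧ r.Coprime m ∧
      Φ u = g * u * g⁻¹ ∧ Φ v = g * v ^ r * g⁻¹ := by
  have : NeZero m := ⟨by omega⟩
  obtain ⟨a, ha⟩ := exists_conj_u hm Φ
  obtain ⟨b, ν, hν, hb⟩ := exists_conj_v hm Φ
  obtain ⟨x, y, hxy⟩ :=
    exists_eq_of_mul_of_of_surjective_conjFactor (surjective_conjFactor_inv_mul Φ ha hb)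
  obtain ⟨r, hrm, hcop, hνr⟩ := exists_coprime_ofAdd_one_pow_eq (k := m) hν
  have hr : r ≠ 0 := by
    rintro rfl
    rw [Nat.coprime_zero_left] at hcop
    omega
  refine ⟨r, a * of x, by omega, by omega, hcop, ?_, ?_⟩
  · have hu : of x * u * (of x)⁻¹ = (u : C2Cm m) := of_mul_of_mul_inv_of (Commute.all _ _)
    calc Φ u = a * (of x * u * (of x)⁻¹) * a⁻¹ := by rw [hu, ha]
      _ = _ := by group
  · have hvr : (v : C2Cm m) ^ r = of ν := by
      rw [v, ← map_pow]
      exact congrArg of hνr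
    have hv : of y * v ^ r * (of y)⁻¹ = (v : C2Cm m) ^ r := by
      rw [hvr]
      exact of_mul_of_mul_inv_of (Commute.all _ _)
    calc Φ v = a * of x * (of y * v ^ r * (of y)⁻¹) * (a * of x)⁻¹ := by
          rw [hb, inv_mul_eq_iff_eq_mul.mp hxy, ← hvr]
          group
      _ = _ := by rw [hv]

end C2Cm

lemma relC2Cm_eq_range (m : ℕ) :
    relC2Cm m = Set.range fun i : Fin 2 => FreeGroup.of i ^ ![2, m] i := by
  ext r
  simp [relC2Cm, Fin.exists_fin_two, eq_comm]

/-- every automorphism `φ` of `C₂ ⋆ C_m` (`m ≥ 3`) equals `ν_r ∘ ι_g`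
for some `g` and some `1 ≤ r ≤ m-1` coprime to `m`; equivalently, on the generators,
`φ u = g u g⁻¹` and `φ v = g vʳ g⁻¹`. -/
theorem stmt2 (m : ℕ) (hm : 3 ≤ m)
    (φ : PresentedGroup (relC2Cm m) ≃* PresentedGroup (relC2Cm m)) :
    ∃ (r : ℕ) (g : PresentedGroup (relC2Cm m)),
      1 ≤ r ∧ r ≤ m - 1 ∧ Nat.Coprime r m ∧
      φ (PresentedGroup.of 0) = g * PresentedGroup.of 0 * g⁻¹ ∧
      φ (PresentedGroup.of 1) = g * (PresentedGroup.of 1) ^ r * g⁻¹ := by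
  revert φ
  rw [relC2Cm_eq_range]
  intro φ
  let e := presentedGroupEquivCoprodI ![2, m]
  obtain ⟨r, g, hr, hrm, hcop, hu, hv⟩ :=
    C2Cm.exists_conj_pow_of_mulEquiv hm (e.symm.trans (φ.trans e))
  have he0 : e (PresentedGroup.of 0) = C2Cm.u := presentedGroupEquivCoprodI_of _ 0
  have he1 : e (PresentedGroup.of 1) = C2Cm.v := presentedGroupEquivCoprodI_of _ 1
  rw [MulEquiv.trans_apply, MulEquiv.trans_apply, ← he0, e.symm_apply_apply] at hu
  rw [MulEquiv.trans_apply, MulEquiv.trans_apply, ← he1, e.symm_apply_apply] at hv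
  refine ⟨r, e.symm g, hr, hrm, hcop, e.injective ?_, e.injective ?_⟩
  · rw [hu, map_mul, map_mul, map_inv, e.apply_symm_apply, he0]
  · rw [hv, map_mul, map_mul, map_inv, map_pow, e.apply_symm_apply, he1]
end

section
/- Let F_{n-1} be the free group on generators v₁, …, v_{n-1}, with n ≥ 4. Define ρ_D on braid generators by: ρ_D(α₁) sends v₁ ↦ v₁ and v_j ↦ v₁⁻¹ v_j for j ≠ 1; and for 2 ≤ i ≤ n-1, ρ_D(α_i) sends v_{i-1} ↦ v_i, v_i ↦ v_i v_{i-1}⁻¹ v_i, and v_j ↦ v_j for j ∉ {i-1, i}. Then each ρ_D(α_i) is an automorphism of F_{n-1} and these automorphisms satisfy the braid relations, so ρ_D extends to a homomorphism B_n → Aut(F_{n-1}). -/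
/-!
`ρ_D(α₁)` is the transvection `v_j ↦ v₁⁻¹ v_j` (`j ≠ 1`), and for `i ≥ 2`, `ρ_D(αᵢ)` is the twist
`v_{i-1} ↦ vᵢ, vᵢ ↦ vᵢ v_{i-1}⁻¹ vᵢ` of the pair `(v_{i-1}, vᵢ)`. Both kinds of maps make sense on
any free group and have explicit inverses of the same shape. The braid relations then become four
relations between twists and transvections which only depend on which of the generators involved
coincide, and which are checked on the generators.
-/

/-- Braid relators on `k` generators `α₀, …, α_{k-1}` (the braid group on `k+1` strands). -/
def braidRels (k : ℕ) : Set (FreeGroup (Fin k)) :=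
  {r | ∃ i j : Fin k,
    ((i : ℕ) + 1 = j ∧
      r = FreeGroup.of i * FreeGroup.of j * FreeGroup.of i *
        (FreeGroup.of j * FreeGroup.of i * FreeGroup.of j)⁻¹) ∨
    ((i : ℕ) + 2 ≤ j ∧
      r = FreeGroup.of i * FreeGroup.of j * (FreeGroup.of i)⁻¹ * (FreeGroup.of j)⁻¹)}

namespace FreeGroup

variable {α : Type*}

def mulAutOfLift (f g : α → FreeGroup α) (hgf : ∀ a, lift g (f a) = of a)
    (hfg : ∀ a, lift f (g a) = of a) : MulAut (FreeGroup α) :=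
  MonoidHom.toMulEquiv (lift f) (lift g) (ext_hom _ _ fun a => by simp [hgf])
    (ext_hom _ _ fun a => by simp [hfg])

@[simp] lemma mulAutOfLift_apply_of (f g : α → FreeGroup α) (hgf hfg) (a : α) :
    mulAutOfLift f g hgf hfg (of a) = f a :=
  lift_apply_of

lemma mulAut_ext {φ ψ : MulAut (FreeGroup α)} (h : ∀ a, φ (of a) = ψ (of a)) : φ = ψ :=
  MulEquiv.toMonoidHom_injective (ext_hom _ _ h)

variable [DecidableEq α]

def transvection (a : α) : MulAut (FreeGroup α) :=
  mulAutOfLift (fun k => if k = a then of a else (of a)⁻¹ * of k)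
    (fun k => if k = a then of a else of a * of k)
    (fun k => by by_cases h : k = a <;> simp [h])
    (fun k => by by_cases h : k = a <;> simp [h])

def twist (a b : α) : MulAut (FreeGroup α) :=
  mulAutOfLift
    (fun k => if k = a then of b else if k = b then of b * (of a)⁻¹ * of b else of k)
    (fun k => if k = a then of a * (of b)⁻¹ * of a else if k = b then of a else of k)
    (fun k => by split_ifs <;> simp_all)
    (fun k => by split_ifs <;> simp_all; split_ifs <;> simp_all)

variable {a b c d k : α}

@[simp] lemma transvection_apply_of_self : transvection a (of a) = of a := by
  simp [transvection]

lemma transvection_apply_of_of_ne (h : k ≠ a) : transvection a (of k) = (of a)⁻¹ * of k := by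
  simp [transvection, h]

@[simp] lemma twist_apply_of_left : twist a b (of a) = of b := by
  simp [twist]

lemma twist_apply_of_right : twist a b (of b) = of b * (of a)⁻¹ * of b := by
  by_cases h : b = a <;> simp [twist, h]

lemma twist_apply_of_of_ne (ha : k ≠ a) (hb : k ≠ b) : twist a b (of k) = of k := by
  simp [twist, ha, hb]

lemma twist_braid (hab : a ≠ b) (hbc : b ≠ c) (hac : a ≠ c) :
    twist a b * twist b c * twist a b = twist b c * twist a b * twist b c := by
  -- both orientations, so that `simp` can discharge the side conditions after `subst`
  have hba := hab.symm; have hcb := hbc.symm; have hca := hac.symm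
  refine mulAut_ext fun k => ?_
  obtain rfl | rfl | rfl | ⟨hka, hkb, hkc⟩ : k = a ∨ k = b ∨ k = c ∨ (k ≠ a ∧ k ≠ b ∧ k ≠ c) := by
    tauto
  all_goals simp [twist_apply_of_right, twist_apply_of_of_ne, *]
  group

lemma twist_comm (hac : a ≠ c) (had : a ≠ d) (hbc : b ≠ c) (hbd : b ≠ d) :
    twist a b * twist c d = twist c d * twist a b := by
  have hca := hac.symm; have hda := had.symm; have hcb := hbc.symm; have hdb := hbd.symm
  refine mulAut_ext fun k => ?_
  obtain rfl | rfl | rfl | rfl | ⟨hka, hkb, hkc, hkd⟩ :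
      k = a ∨ k = b ∨ k = c ∨ k = d ∨ (k ≠ a ∧ k ≠ b ∧ k ≠ c ∧ k ≠ d) := by
    tauto
  all_goals simp [twist_apply_of_right, twist_apply_of_of_ne, *]

lemma transvection_twist_braid (hab : a ≠ b) :
    transvection a * twist a b * transvection a = twist a b * transvection a * twist a b := by
  have hba := hab.symm
  refine mulAut_ext fun k => ?_
  obtain rfl | rfl | ⟨hka, hkb⟩ : k = a ∨ k = b ∨ (k ≠ a ∧ k ≠ b) := by
    tauto
  all_goals simp [twist_apply_of_right, twist_apply_of_of_ne, transvection_apply_of_of_ne, *]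
  all_goals group

lemma transvection_twist_comm (hab : a ≠ b) (hac : a ≠ c) :
    transvection a * twist b c = twist b c * transvection a := by
  have hba := hab.symm; have hca := hac.symm
  refine mulAut_ext fun k => ?_
  obtain rfl | rfl | rfl | ⟨hka, hkb, hkc⟩ : k = a ∨ k = b ∨ k = c ∨ (k ≠ a ∧ k ≠ b ∧ k ≠ c) := by
    tauto
  all_goals simp [twist_apply_of_right, twist_apply_of_of_ne, transvection_apply_of_of_ne, *]
  all_goals group

end FreeGroup

lemma lift_eq_one_of_mem_braidRels {k : ℕ} {G : Type*} [Group G] {φ : Fin k → G}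
    (hbraid : ∀ i j : Fin k, (i : ℕ) + 1 = j → φ i * φ j * φ i = φ j * φ i * φ j)
    (hcomm : ∀ i j : Fin k, (i : ℕ) + 2 ≤ j → φ i * φ j = φ j * φ i) :
    ∀ r ∈ braidRels k, FreeGroup.lift φ r = 1 := by
  rintro r ⟨i, j, ⟨hij, rfl⟩ | ⟨hij, rfl⟩⟩
  · simpa only [map_mul, map_inv, FreeGroup.lift_apply_of, mul_inv_eq_one] using hbraid i j hij
  · simp [hcomm i j hij]

section RhoD

open FreeGroup

variable {m : ℕ} {i j : Fin m}

def rhoD (i : Fin m) : MulAut (FreeGroup (Fin m)) :=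
  if (i : ℕ) = 0 then transvection i else twist ⟨i - 1, by omega⟩ i

lemma rhoD_of_val_eq_zero (hi : (i : ℕ) = 0) : rhoD i = transvection i := if_pos hi

lemma rhoD_of_val_add_one_eq (h : (j : ℕ) + 1 = i) : rhoD i = twist j i := by
  rw [rhoD, if_neg (by omega)]
  congr
  omega

lemma exists_val_add_one_eq (hi : (i : ℕ) ≠ 0) : ∃ j : Fin m, (j : ℕ) + 1 = i :=
  ⟨⟨i - 1, by omega⟩, by simp only; omega⟩

lemma rhoD_braid (h : (i : ℕ) + 1 = j) : rhoD i * rhoD j * rhoD i = rhoD j * rhoD i * rhoD j := by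
  rw [rhoD_of_val_add_one_eq h]
  rcases eq_or_ne (i : ℕ) 0 with hi | hi
  · rw [rhoD_of_val_eq_zero hi]
    exact transvection_twist_braid (by omega)
  · obtain ⟨l, hl⟩ := exists_val_add_one_eq hi
    rw [rhoD_of_val_add_one_eq hl]
    exact twist_braid (by omega) (by omega) (by omega)

lemma rhoD_comm (h : (i : ℕ) + 2 ≤ j) : rhoD i * rhoD j = rhoD j * rhoD i := by
  obtain ⟨l, hl⟩ := exists_val_add_one_eq (i := j) (by omega)
  rw [rhoD_of_val_add_one_eq hl]
  rcases eq_or_ne (i : ℕ) 0 with hi | hi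
  · rw [rhoD_of_val_eq_zero hi]
    exact transvection_twist_comm (by omega) (by omega)
  · obtain ⟨l', hl'⟩ := exists_val_add_one_eq hi
    rw [rhoD_of_val_add_one_eq hl']
    exact twist_comm (by omega) (by omega) (by omega) (by omega)

end RhoD

theorem stmt11_general (m : ℕ) :
    ∃ φ : Fin m → MulAut (FreeGroup (Fin m)),
      (∀ i j : Fin m, (i : ℕ) = 0 → j = i → φ i (FreeGroup.of j) = FreeGroup.of j) ∧
      (∀ i j : Fin m, (i : ℕ) = 0 → j ≠ i →
        φ i (FreeGroup.of j) = (FreeGroup.of i)⁻¹ * FreeGroup.of j) ∧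
      (∀ i j : Fin m, (j : ℕ) + 1 = i →
        φ i (FreeGroup.of j) = FreeGroup.of i ∧
        φ i (FreeGroup.of i) = FreeGroup.of i * (FreeGroup.of j)⁻¹ * FreeGroup.of i) ∧
      (∀ i j : Fin m, 1 ≤ (i : ℕ) → (j : ℕ) + 1 ≠ (i : ℕ) → j ≠ i →
        φ i (FreeGroup.of j) = FreeGroup.of j) ∧
      (∀ i j : Fin m, (i : ℕ) + 1 = j → φ i * φ j * φ i = φ j * φ i * φ j) ∧
      (∀ i j : Fin m, (i : ℕ) + 2 ≤ j → φ i * φ j = φ j * φ i) ∧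
      ∃ ρ : PresentedGroup (braidRels m) →* MulAut (FreeGroup (Fin m)),
        ∀ i : Fin m, ρ (PresentedGroup.of i) = φ i := by
  refine ⟨rhoD, fun i j hi hj => ?_, fun i j hi hj => ?_, fun i j h => ?_,
    fun i j hi h₁ h₂ => ?_, fun _ _ => rhoD_braid, fun _ _ => rhoD_comm,
    PresentedGroup.toGroup (lift_eq_one_of_mem_braidRels (fun _ _ => rhoD_braid)
      (fun _ _ => rhoD_comm)), fun _ => PresentedGroup.toGroup.of _⟩
  · rw [rhoD_of_val_eq_zero hi, hj, FreeGroup.transvection_apply_of_self]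
  · rw [rhoD_of_val_eq_zero hi, FreeGroup.transvection_apply_of_of_ne hj]
  · rw [rhoD_of_val_add_one_eq h]
    exact ⟨FreeGroup.twist_apply_of_left, FreeGroup.twist_apply_of_right⟩
  · obtain ⟨l, hl⟩ := exists_val_add_one_eq (i := i) (by omega)
    rw [rhoD_of_val_add_one_eq hl, FreeGroup.twist_apply_of_of_ne (by omega) h₂]

/-- with `n = m+1 ≥ 4` (so `m ≥ 3`), on the free group `F` of rank `m = n-1`
(generators `v₀, …, v_{m-1}` standing for `v₁, …, v_{n-1}`), the maps `ρ_D(αᵢ)` defined by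
`ρ_D(α₁) : v₁ ↦ v₁, v_j ↦ v₁⁻¹ v_j (j ≠ 1)` and, for `i ≥ 2`,
`ρ_D(αᵢ) : v_{i-1} ↦ vᵢ, vᵢ ↦ vᵢ v_{i-1}⁻¹ vᵢ, v_j ↦ v_j` otherwise (here the braid
generator of `0`-index `i` is `α_{i+1}`), are automorphisms satisfying the braid
relations, hence extend to a homomorphism from the braid group on `n` strands to `Aut(F)`. -/
theorem stmt11 (m : ℕ) (hm : 3 ≤ m) :
    ∃ φ : Fin m → MulAut (FreeGroup (Fin m)),
      (∀ i j : Fin m, (i : ℕ) = 0 → j = i → φ i (FreeGroup.of j) = FreeGroup.of j) ∧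
      (∀ i j : Fin m, (i : ℕ) = 0 → j ≠ i →
        φ i (FreeGroup.of j) = (FreeGroup.of i)⁻¹ * FreeGroup.of j) ∧
      (∀ i j : Fin m, (j : ℕ) + 1 = i →
        φ i (FreeGroup.of j) = FreeGroup.of i ∧
        φ i (FreeGroup.of i) = FreeGroup.of i * (FreeGroup.of j)⁻¹ * FreeGroup.of i) ∧
      (∀ i j : Fin m, 1 ≤ (i : ℕ) → (j : ℕ) + 1 ≠ (i : ℕ) → j ≠ i →
        φ i (FreeGroup.of j) = FreeGroup.of j) ∧
      (∀ i j : Fin m, (i : ℕ) + 1 = j → φ i * φ j * φ i = φ j * φ i * φ j) ∧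
      (∀ i j : Fin m, (i : ℕ) + 2 ≤ j → φ i * φ j = φ j * φ i) ∧
      ∃ ρ : PresentedGroup (braidRels m) →* MulAut (FreeGroup (Fin m)),
        ∀ i : Fin m, ρ (PresentedGroup.of i) = φ i :=
  stmt11_general m
end

section
/- Let C = ⟨x⟩ ⋆ ⟨y⟩ ≅ C₂ ⋆ C₂ with x, y of order 2, and let α be the automorphism of C defined by α(x) = y, α(y) = yxy. Then the fixed subgroup C^⟨α⟩ = {c ∈ C : α(c) = c} is the infinite cyclic subgroup generated by xy. -/
/-- Relators for the free product `⋆_k C₂ = ⟨x₀, …, x_{k-1} | xᵢ² = 1⟩`. -/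
def relC2s (k : ℕ) : Set (FreeGroup (Fin k)) :=
  {r | ∃ i : Fin k, r = FreeGroup.of i ^ 2}

namespace Stmt14Aux

open DihedralGroup

abbrev G := PresentedGroup (relC2s 2)

def toZ : ZMod 0 → ℤ := fun i => i

lemma toZ_add (i j : ZMod 0) : toZ (i + j) = toZ i + toZ j := rfl
lemma toZ_sub (i j : ZMod 0) : toZ (i - j) = toZ i - toZ j := rfl

def x : G := PresentedGroup.of 0
def y : G := PresentedGroup.of 1
def a : G := x * y

lemma sq_of (i : Fin 2) : (PresentedGroup.of i : G) ^ 2 = 1 := by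
  have hmem : ((FreeGroup.of i) ^ 2 : FreeGroup (Fin 2)) ∈
      Subgroup.normalClosure (relC2s 2) :=
    Subgroup.subset_normalClosure ⟨i, rfl⟩
  have h2 : (PresentedGroup.of i : G) ^ 2 =
      PresentedGroup.mk (relC2s 2) ((FreeGroup.of i) ^ 2) := by
    rw [map_pow]; rfl
  rw [h2]
  exact (QuotientGroup.eq_one_iff _).mpr hmem

lemma xx : x * x = 1 := by have := sq_of 0; rwa [sq] at this
lemma yy : y * y = 1 := by have := sq_of 1; rwa [sq] at this
lemma xinv : x⁻¹ = x := inv_eq_of_mul_eq_one_right xx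
lemma yinv : y⁻¹ = y := inv_eq_of_mul_eq_one_right yy

lemma conj_a : x * a * x⁻¹ = a⁻¹ := by
  rw [xinv]
  have h1 : x * a * x = (x * x) * (y * x) := by rw [a]; group
  rw [h1, xx, one_mul, a, mul_inv_rev, xinv, yinv]

lemma conj_a_zpow (i : ℤ) : x * a ^ i * x⁻¹ = a ^ (-i) := by
  calc x * a ^ i * x⁻¹ = (x * a * x⁻¹) ^ i := conj_zpow.symm
    _ = (a⁻¹) ^ i := by rw [conj_a]
    _ = a ^ (-i) := by rw [inv_zpow, zpow_neg]

lemma x_comm (i : ℤ) : x * a ^ i = a ^ (-i) * x := mul_inv_eq_iff_eq_mul.mp (conj_a_zpow i)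

lemma x_comm' (i : ℤ) : a ^ i * x = x * a ^ (-i) := by
  have := (x_comm (-i)).symm; rwa [neg_neg] at this

/-- The homomorphism `DihedralGroup 0 → G`. -/
def psi : DihedralGroup 0 →* G :=
  MonoidHom.mk' (fun d => match d with
    | DihedralGroup.r i => a ^ (toZ i)
    | DihedralGroup.sr i => x * a ^ (toZ i))
    (by
      rintro (i | i) (j | j)
      · show a ^ toZ (i + j) = a ^ toZ i * a ^ toZ j
        rw [toZ_add, zpow_add]
      · show x * a ^ toZ (j - i) = a ^ toZ i * (x * a ^ toZ j)
        rw [← mul_assoc, x_comm' (toZ i), mul_assoc, ← zpow_add, toZ_sub]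
        ring_nf
      · show x * a ^ toZ (i + j) = (x * a ^ toZ i) * a ^ toZ j
        rw [toZ_add, zpow_add, mul_assoc]
      · show a ^ toZ (j - i) = (x * a ^ toZ i) * (x * a ^ toZ j)
        rw [mul_assoc, ← mul_assoc (a ^ toZ i), x_comm' (toZ i), ← mul_assoc,
          ← mul_assoc, xx, one_mul, ← zpow_add, toZ_sub]
        ring_nf)

lemma psi_r (i : ZMod 0) : psi (DihedralGroup.r i) = a ^ (toZ i) := rfl
lemma psi_sr (i : ZMod 0) : psi (DihedralGroup.sr i) = x * a ^ (toZ i) := rfl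

lemma rels_hold : ∀ r ∈ relC2s 2,
    FreeGroup.lift (fun i : Fin 2 => DihedralGroup.sr (i.val : ZMod 0)) r = 1 := by
  rintro r ⟨i, rfl⟩
  rw [map_pow, FreeGroup.lift_apply_of, sq, sr_mul_self]

/-- The homomorphism `G → DihedralGroup 0`. -/
def phi : G →* DihedralGroup 0 := PresentedGroup.toGroup rels_hold

lemma phi_x : phi x = DihedralGroup.sr 0 := by
  show phi (PresentedGroup.of 0) = _
  rw [phi, PresentedGroup.toGroup.of]
  norm_num

lemma phi_y : phi y = DihedralGroup.sr 1 := by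
  show phi (PresentedGroup.of 1) = _
  rw [phi, PresentedGroup.toGroup.of]
  norm_num

lemma phi_a : phi a = DihedralGroup.r 1 := by
  rw [a, map_mul, phi_x, phi_y, sr_mul_sr, sub_zero]

lemma psi_phi : psi.comp phi = MonoidHom.id G := by
  apply MonoidHom.eq_of_eqOn_dense (PresentedGroup.closure_range_of (relC2s 2))
  rintro _ ⟨i, rfl⟩
  fin_cases i
  · show psi (phi x) = x
    rw [phi_x, psi_sr]
    have : toZ 0 = 0 := rfl
    rw [this, zpow_zero, mul_one]
  · show psi (phi y) = y
    rw [phi_y, psi_sr]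
    have : toZ 1 = 1 := rfl
    rw [this, zpow_one, a, ← mul_assoc, xx, one_mul]

lemma psi_phi_apply (g : G) : psi (phi g) = g := by
  have := congrFun (congrArg DFunLike.coe psi_phi) g
  simpa using this

end Stmt14Aux

/-- for `C = C₂ ⋆ C₂ = ⟨x, y | x² = y² = 1⟩` and the automorphism `α`
with `α x = y`, `α y = y x y`, the fixed subgroup of `α` is the infinite cyclic
subgroup generated by `x y`. -/
theorem stmt14
    (α : PresentedGroup (relC2s 2) ≃* PresentedGroup (relC2s 2))
    (hx : α (PresentedGroup.of 0) = PresentedGroup.of 1)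
    (hy : α (PresentedGroup.of 1) =
      PresentedGroup.of 1 * PresentedGroup.of 0 * PresentedGroup.of 1) :
    ¬ IsOfFinOrder
      (PresentedGroup.of 0 * PresentedGroup.of 1 : PresentedGroup (relC2s 2)) ∧
    ∀ c : PresentedGroup (relC2s 2),
      α c = c ↔ c ∈ Subgroup.zpowers (PresentedGroup.of 0 * PresentedGroup.of 1) := by
  open Stmt14Aux in
  have hxx : (PresentedGroup.of 0 * PresentedGroup.of 1 : PresentedGroup (relC2s 2)) = a := rfl
  have hax : α Stmt14Aux.x = Stmt14Aux.y := hx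
  have hay : α Stmt14Aux.y = Stmt14Aux.y * Stmt14Aux.x * Stmt14Aux.y := hy
  have haa : α Stmt14Aux.a = Stmt14Aux.a := by
    rw [Stmt14Aux.a, map_mul, hax, hay, ← mul_assoc, ← mul_assoc, Stmt14Aux.yy, one_mul]
  constructor
  · rw [hxx]
    intro h
    have h2 := Stmt14Aux.phi.isOfFinOrder h
    rw [Stmt14Aux.phi_a] at h2
    have h3 : orderOf (DihedralGroup.r 1 : DihedralGroup 0) = 0 := DihedralGroup.orderOf_r_one
    rw [orderOf_eq_zero_iff] at h3
    exact h3 h2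
  · intro c
    rw [hxx]
    constructor
    · intro hc
      have hrep := Stmt14Aux.psi_phi_apply c
      rcases hd : Stmt14Aux.phi c with i | i
      · rw [hd, Stmt14Aux.psi_r] at hrep
        exact ⟨Stmt14Aux.toZ i, hrep⟩
      · exfalso
        rw [hd, Stmt14Aux.psi_sr] at hrep
        have hαc : α c = Stmt14Aux.y * Stmt14Aux.a ^ (Stmt14Aux.toZ i) := by
          rw [← hrep, map_mul, map_zpow, hax, haa]
        rw [hc, ← hrep] at hαc
        have hxy : Stmt14Aux.x = Stmt14Aux.y := mul_right_cancel hαc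
        have := congrArg Stmt14Aux.phi hxy
        rw [Stmt14Aux.phi_x, Stmt14Aux.phi_y] at this
        have h01 : (0 : ZMod 0) = 1 := by injection this
        exact one_ne_zero h01.symm
    · rintro ⟨n, rfl⟩
      rw [map_zpow, haa]
end

section
/- Let K = ⟨x₁, …, x_n | x_i² = 1⟩ be the free product of n ≥ 2 copies of C₂, with B_n acting on K via α_i : x_i ↦ x_{i+1}, x_{i+1} ↦ x_{i+1} x_i x_{i+1}, x_j ↦ x_j (j ∉ {i, i+1}). Then the subgroup K^{B_n} of elements fixed by every braid automorphism is the infinite cyclic subgroup generated by δ = x₁x₂⋯x_n. -/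
def braidPrefix {G : Type*} [Group G] {m : ℕ} (φ : Fin m → MulAut G) : ℕ → MulAut G
  | 0 => 1
  | k + 1 => if h : k < m then φ ⟨k, h⟩ * braidPrefix φ k else braidPrefix φ k

theorem braidPrefix_apply_eq_self {G : Type*} [Group G] {m : ℕ} {φ : Fin m → MulAut G} {w : G}
    (hw : ∀ i, φ i w = w) : ∀ k, braidPrefix φ k w = w
  | 0 => rfl
  | k + 1 => by
    rw [braidPrefix]
    split_ifs with h
    · rw [MulAut.mul_apply, braidPrefix_apply_eq_self hw k, hw]
    · exact braidPrefix_apply_eq_self hw k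

open PresentedGroup

abbrev FreeProdC2 (k : ℕ) : Type := PresentedGroup (relC2s k)

namespace FreeProdC2

variable {k : ℕ}

theorem of_mul_self (j : Fin k) : (of j : FreeProdC2 k) * of j = 1 := by
  rw [← sq]
  exact one_of_mem ⟨j, rfl⟩

theorem of_inv (j : Fin k) : (of j : FreeProdC2 k)⁻¹ = of j :=
  inv_eq_of_mul_eq_one_right (of_mul_self j)

def word (l : List (Fin k)) : FreeProdC2 k := (l.map of).prod

@[simp] theorem word_nil : word ([] : List (Fin k)) = 1 := rfl

@[simp] theorem word_cons (a : Fin k) (l : List (Fin k)) : word (a :: l) = of a * word l :=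
  List.prod_cons

@[simp] theorem word_append (s t : List (Fin k)) : word (s ++ t) = word s * word t := by
  simp [word]

theorem word_reverse (l : List (Fin k)) : word l.reverse = (word l)⁻¹ := by
  induction l with
  | nil => simp
  | cons a l ih => simp [ih, of_inv]

theorem exists_word (w : FreeProdC2 k) : ∃ l, word l = w := by
  have hw : w ∈ Subgroup.closure (Set.range of) := by simp [closure_range_of]
  induction hw using Subgroup.closure_induction with
  | mem _ h => obtain ⟨j, rfl⟩ := h; exact ⟨[j], by simp⟩
  | one => exact ⟨[], rfl⟩
  | mul _ _ _ _ h₁ h₂ =>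
    obtain ⟨s, rfl⟩ := h₁
    obtain ⟨t, rfl⟩ := h₂
    exact ⟨s ++ t, word_append s t⟩
  | inv _ _ h => obtain ⟨l, rfl⟩ := h; exact ⟨l.reverse, word_reverse l⟩

def reducedCons (i : Fin k) : List (Fin k) → List (Fin k)
  | [] => [i]
  | a :: l => if a = i then l else i :: a :: l

@[simp] theorem reducedCons_nil (i : Fin k) : reducedCons i [] = [i] := rfl

theorem reducedCons_cons (i a : Fin k) (l : List (Fin k)) :
    reducedCons i (a :: l) = if a = i then l else i :: a :: l := rfl

@[simp] theorem reducedCons_cons_self (i : Fin k) (l : List (Fin k)) :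
    reducedCons i (i :: l) = l := if_pos rfl

theorem reducedCons_of_head?_ne {i : Fin k} {l : List (Fin k)} (h : l.head? ≠ some i) :
    reducedCons i l = i :: l := by
  cases l with
  | nil => rfl
  | cons a l => exact if_neg fun ha => h (by rw [ha]; rfl)

theorem isChain_reducedCons (i : Fin k) {l : List (Fin k)} (h : l.IsChain (· ≠ ·)) :
    (reducedCons i l).IsChain (· ≠ ·) := by
  cases l with
  | nil => simp
  | cons a l =>
    by_cases ha : a = i
    · simpa [reducedCons_cons, ha] using h.tail
    · simpa [reducedCons_cons, ha, List.isChain_cons_cons, Ne.symm ha] using h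

theorem reducedCons_reducedCons (i : Fin k) {l : List (Fin k)} (h : l.IsChain (· ≠ ·)) :
    reducedCons i (reducedCons i l) = l := by
  rcases l with _ | ⟨a, _ | ⟨b, l⟩⟩
  · simp
  · by_cases ha : a = i <;> simp [reducedCons_cons, ha]
  · by_cases ha : a = i
    · subst ha
      simp [reducedCons_cons, (List.isChain_cons_cons.1 h).1.symm]
    · simp [reducedCons_cons, ha]

theorem word_reducedCons (i : Fin k) (l : List (Fin k)) :
    word (reducedCons i l) = of i * word l := by
  cases l with
  | nil => simp
  | cons a l =>
    by_cases ha : a = i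
    · simp [ha, ← mul_assoc, of_mul_self]
    · simp [reducedCons_cons, ha]

def ReducedWord (k : ℕ) : Type := {l : List (Fin k) // l.IsChain (· ≠ ·)}

def reducedConsPerm (i : Fin k) : Equiv.Perm (ReducedWord k) :=
  Function.Involutive.toPerm (fun l => ⟨reducedCons i l.1, isChain_reducedCons i l.2⟩)
    fun l => Subtype.ext (reducedCons_reducedCons i l.2)

theorem reducedConsPerm_mul_self (i : Fin k) : reducedConsPerm i * reducedConsPerm i = 1 :=
  Equiv.ext fun l => Subtype.ext (reducedCons_reducedCons i l.2)

def toPermReducedWord : FreeProdC2 k →* Equiv.Perm (ReducedWord k) :=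
  toGroup (f := reducedConsPerm) <| by
    rintro _ ⟨i, rfl⟩
    rw [map_pow, FreeGroup.lift_apply_of, sq, reducedConsPerm_mul_self]

def normalForm (w : FreeProdC2 k) : List (Fin k) :=
  (toPermReducedWord w ⟨[], List.isChain_nil⟩).1

theorem isChain_normalForm (w : FreeProdC2 k) : (normalForm w).IsChain (· ≠ ·) :=
  (toPermReducedWord w _).2

@[simp] theorem normalForm_one : normalForm (1 : FreeProdC2 k) = [] := rfl

theorem normalForm_of_mul (i : Fin k) (w : FreeProdC2 k) :
    normalForm (of i * w) = reducedCons i (normalForm w) := by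
  rw [normalForm, map_mul, toPermReducedWord, toGroup.of]
  rfl

theorem word_normalForm (w : FreeProdC2 k) : word (normalForm w) = w := by
  obtain ⟨l, rfl⟩ := exists_word w
  induction l with
  | nil => rfl
  | cons a l ih => rw [word_cons, normalForm_of_mul, word_reducedCons, ih]

theorem normalForm_word {l : List (Fin k)} (h : l.IsChain (· ≠ ·)) : normalForm (word l) = l := by
  induction l with
  | nil => rfl
  | cons a l ih =>
    rw [word_cons, normalForm_of_mul, ih h.tail]
    cases l with
    | nil => rfl
    | cons b l => exact reducedCons_of_head?_ne (by simpa using (List.isChain_cons_cons.1 h).1.symm)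

theorem normalForm_injective : Function.Injective (normalForm (k := k)) :=
  Function.LeftInverse.injective word_normalForm

theorem normalForm_inv (w : FreeProdC2 k) : normalForm w⁻¹ = (normalForm w).reverse := by
  conv_lhs => rw [← word_normalForm w, ← word_reverse]
  exact normalForm_word (List.isChain_reverse.2 ((isChain_normalForm w).imp fun _ _ => Ne.symm))

theorem normalForm_mul_of (w : FreeProdC2 k) (i : Fin k) :
    normalForm (w * of i) = (reducedCons i (normalForm w).reverse).reverse := by
  rw [← inv_inv (w * of i), mul_inv_rev, of_inv, normalForm_inv, normalForm_of_mul, normalForm_inv]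

section map

variable {k k' : ℕ} (f : Fin k → Fin k')

def map : FreeProdC2 k →* FreeProdC2 k' :=
  toGroup (f := fun j => of (f j)) <| by
    rintro _ ⟨i, rfl⟩
    rw [map_pow, FreeGroup.lift_apply_of, sq, of_mul_self]

@[simp] theorem map_of (j : Fin k) : map f (of j) = of (f j) := toGroup.of _

theorem map_word (l : List (Fin k)) : map f (word l) = word (l.map f) := by
  induction l with
  | nil => simp
  | cons a l ih => simp [ih]

variable {f}

theorem normalForm_map (hf : Function.Injective f) (w : FreeProdC2 k) :
    normalForm (map f w) = (normalForm w).map f := by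
  conv_lhs => rw [← word_normalForm w, map_word]
  exact normalForm_word ((List.isChain_map f).2 ((isChain_normalForm w).imp fun _ _ => hf.ne))

end map

theorem eq_map_range_of_map_sub_one {R : Type*} [AddCommGroupWithOne R] (a : R) (u : List R)
    (h : u.map (· - 1) = a :: u.dropLast) :
    u = (List.range u.length).map fun n : ℕ => a + 1 + n := by
  induction u generalizing a with
  | nil => simp at h
  | cons b t ih =>
    simp only [List.map_cons, List.cons.injEq] at h
    obtain ⟨hb, ht⟩ := h
    rw [sub_eq_iff_eq_add] at hb
    subst hb
    rcases t with _ | ⟨c, t⟩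
    · simp
    · rw [List.dropLast_cons_cons] at ht
      rw [List.length_cons, List.range_succ_eq_map, List.map_cons, List.map_map]
      congr 1
      · simp
      · conv_lhs => rw [ih _ ht]
        refine List.map_congr_left fun n _ => ?_
        simp only [Function.comp_apply, Nat.cast_succ]
        abel

open Fin.NatCast Fin.CommRing

variable {m : ℕ}

def delta (m : ℕ) : FreeProdC2 (m + 1) := word ((List.range (m + 1)).map Nat.cast)

theorem prod_ofFn_of : (List.ofFn fun j : Fin (m + 1) => (of j : FreeProdC2 (m + 1))).prod =
    delta m := by
  rw [delta, word, List.map_map, ← List.map_coe_finRange_eq_range, List.map_map, List.ofFn_eq_map]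
  simp [Function.comp_def]

theorem word_map_cast_range_mul (q : ℕ) :
    word ((List.range (q * (m + 1))).map Nat.cast) = delta m ^ q := by
  induction q with
  | zero => simp
  | succ q ih =>
    rw [add_one_mul, List.range_add, List.map_append, word_append, ih, pow_succ, List.map_map]
    congr 3
    funext j
    simp

theorem isChain_map_cast_range (hm : 1 ≤ m) (L : ℕ) :
    ((List.range L).map (Nat.cast : ℕ → Fin (m + 1))).IsChain (· ≠ ·) := by
  rcases L with _ | L
  · simp
  rw [List.isChain_map, List.isChain_range_succ]
  intro j _
  rw [Nat.cast_succ, Ne, left_eq_add, Fin.one_eq_zero_iff]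
  omega

theorem word_map_cast_range_mem_zpowers {L : ℕ}
    (h : ((List.range L).map (Nat.cast : ℕ → Fin (m + 1))).getLast? = some (Fin.last m)) :
    word ((List.range L).map Nat.cast) ∈ Subgroup.zpowers (delta m) := by
  rcases L with _ | n
  · simp at h
  rw [List.range_succ, List.map_append, List.map_singleton, List.getLast?_concat,
    Option.some_inj] at h
  have hdvd : m + 1 ∣ n + 1 := by
    rw [← Fin.natCast_eq_zero]
    push_cast
    rw [h, Fin.last_add_one]
  obtain ⟨q, hq⟩ := hdvd
  rw [hq, mul_comm, word_map_cast_range_mul]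
  exact ⟨q, zpow_natCast _ _⟩

theorem not_isOfFinOrder_delta (hm : 1 ≤ m) : ¬ IsOfFinOrder (delta m) := by
  rw [isOfFinOrder_iff_pow_eq_one]
  rintro ⟨q, hq, h⟩
  rw [← word_map_cast_range_mul] at h
  have := congrArg (fun w => (normalForm w).length) h
  simp only [normalForm_word (isChain_map_cast_range hm _), normalForm_one, List.length_map,
    List.length_range, List.length_nil] at this
  exact Nat.mul_ne_zero hq.ne' m.succ_ne_zero this

def rotate : FreeProdC2 (m + 1) →* FreeProdC2 (m + 1) := map (· - 1)

theorem normalForm_rotate (w : FreeProdC2 (m + 1)) :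
    normalForm (rotate w) = (normalForm w).map (· - 1) :=
  normalForm_map sub_left_injective w

theorem mem_zpowers_delta_of_getLast? (hm : 1 ≤ m) {w : FreeProdC2 (m + 1)}
    (hw : rotate w = of (Fin.last m) * w * of (Fin.last m))
    (hlast : (normalForm w).getLast? = some (Fin.last m)) :
    w ∈ Subgroup.zpowers (delta m) := by
  obtain ⟨s, hs⟩ := List.getLast?_eq_some_iff.1 hlast
  have hE : (normalForm w).map (· - 1) = reducedCons (Fin.last m) s := by
    rw [← normalForm_rotate, hw, mul_assoc, normalForm_of_mul, normalForm_mul_of, hs]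
    simp
  rcases s with _ | ⟨a, s⟩
  · rw [hs, List.nil_append, List.map_singleton, reducedCons_nil, List.singleton_inj,
      sub_eq_self, Fin.one_eq_zero_iff] at hE
    omega
  by_cases ha : a = Fin.last m
  · have := congrArg List.length hE
    rw [ha, reducedCons_cons_self, List.length_map, hs, List.length_append, List.length_cons] at this
    omega
  have hasc := eq_map_range_of_map_sub_one _ _ <| by
    rw [hE, reducedCons_of_head?_ne (by simpa), hs, List.dropLast_concat]
  simp only [Fin.last_add_one, zero_add] at hasc
  rw [hasc] at hlast
  rw [← word_normalForm w, hasc]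
  exact word_map_cast_range_mem_zpowers hlast

theorem eq_one_of_rotate_eq {w : FreeProdC2 (m + 1)}
    (hw : rotate w = of (Fin.last m) * w * of (Fin.last m))
    (hhead : (normalForm w).head? ≠ some (Fin.last m))
    (hlast : (normalForm w).getLast? ≠ some (Fin.last m)) : w = 1 := by
  rw [← normalForm_injective.eq_iff, normalForm_one]
  by_contra hne
  have hconj : normalForm (of (Fin.last m) * w * of (Fin.last m)) =
      Fin.last m :: normalForm w ++ [Fin.last m] := by
    rw [normalForm_mul_of, normalForm_of_mul, reducedCons_of_head?_ne hhead, List.reverse_cons,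
      reducedCons_of_head?_ne]
    · simp
    · rw [List.head?_append, List.head?_reverse]
      cases h : (normalForm w).getLast? with
      | none => exact absurd (List.getLast?_eq_none_iff.1 h) hne
      | some b => simpa [h] using hlast
  have := congrArg List.length ((normalForm_rotate w).symm.trans (hw ▸ hconj))
  simp only [List.length_map, List.length_append, List.length_cons] at this
  omega

theorem mem_zpowers_delta_of_rotate_eq (hm : 1 ≤ m) {w : FreeProdC2 (m + 1)}
    (hw : rotate w = of (Fin.last m) * w * of (Fin.last m)) :
    w ∈ Subgroup.zpowers (delta m) := by
  by_cases hlast : (normalForm w).getLast? = some (Fin.last m)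
  · exact mem_zpowers_delta_of_getLast? hm hw hlast
  by_cases hhead : (normalForm w).head? = some (Fin.last m)
  · have hw' : rotate w⁻¹ = of (Fin.last m) * w⁻¹ * of (Fin.last m) := by
      rw [map_inv, hw, mul_inv_rev, mul_inv_rev, of_inv, mul_assoc]
    refine inv_mem_iff.1 (mem_zpowers_delta_of_getLast? hm hw' ?_)
    rwa [normalForm_inv, List.getLast?_reverse]
  rw [eq_one_of_rotate_eq hw hhead hlast]
  exact one_mem _

def IsStandardBraidAction (φ : Fin m → MulAut (FreeProdC2 (m + 1))) : Prop :=
  ∀ (i : Fin m) (j : Fin (m + 1)),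
    φ i (of j) =
      if j = i.castSucc then of i.succ
      else if j = i.succ then of i.succ * of i.castSucc * of i.succ
      else of j

def genNat (n : ℕ) : FreeProdC2 (m + 1) := of (n : Fin (m + 1))

theorem natCast_inj_of_le {n n' : ℕ} (hn : n ≤ m) (hn' : n' ≤ m) :
    (n : Fin (m + 1)) = n' ↔ n = n' := by
  rw [Fin.ext_iff, Fin.val_cast_of_lt (by omega), Fin.val_cast_of_lt (by omega)]

section braid

variable {φ : Fin m → MulAut (FreeProdC2 (m + 1))}

theorem apply_genNat_self (hφ : IsStandardBraidAction φ) (i : Fin m) :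
    φ i (genNat i) = genNat (i + 1) := by
  simpa [genNat, Fin.cast_val_eq_self i.castSucc] using hφ i i.castSucc

theorem apply_genNat_succ (hφ : IsStandardBraidAction φ) (i : Fin m) :
    φ i (genNat (i + 1)) = genNat (i + 1) * genNat i * genNat (i + 1) := by
  have hne : i.succ ≠ i.castSucc := Fin.ext_iff.not.2 (by simp)
  simpa [genNat, hne, Fin.cast_val_eq_self i.castSucc, Fin.cast_val_eq_self i.succ]
    using hφ i i.succ

theorem apply_genNat_of_ne (hφ : IsStandardBraidAction φ) (i : Fin m) {n : ℕ} (hn : n ≤ m)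
    (h₁ : n ≠ i) (h₂ : n ≠ i + 1) : φ i (genNat n) = genNat n := by
  have h₁' : (n : Fin (m + 1)) ≠ i.castSucc := by
    rw [← Fin.cast_val_eq_self i.castSucc, Fin.val_castSucc, Ne, natCast_inj_of_le hn i.isLt.le]
    exact h₁
  have h₂' : (n : Fin (m + 1)) ≠ i.succ := by
    rw [← Fin.cast_val_eq_self i.succ, Fin.val_succ, Ne, natCast_inj_of_le hn i.isLt]
    exact h₂
  simpa [genNat, h₁', h₂'] using hφ i n

theorem braidPrefix_apply_genNat (hφ : IsStandardBraidAction φ) {k n : ℕ} (hk : k ≤ m)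
    (hn : n ≤ m) :
    braidPrefix φ k (genNat n) =
      if n = 0 then genNat k
      else if n ≤ k then genNat k * genNat (n - 1) * genNat k
      else genNat n := by
  induction k with
  | zero => split_ifs with h <;> first | omega | simp [braidPrefix, h]
  | succ k ih =>
    rw [braidPrefix, dif_pos (by omega), MulAut.mul_apply, ih (by omega)]
    have hi := apply_genNat_self hφ ⟨k, hk⟩
    have hi' := apply_genNat_succ hφ ⟨k, hk⟩
    have hfix := fun n hn => apply_genNat_of_ne (n := n) hφ ⟨k, hk⟩ hn
    simp only at hi hi' hfix
    split_ifs with h₀ h₁ h₂ h₂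
    · exact hi
    · rw [map_mul, map_mul, hi, hfix _ (by omega) (by omega) (by omega)]
    · omega
    · obtain rfl : n = k + 1 := by omega
      rw [hi', Nat.add_sub_cancel]
    · exact hfix n hn (by omega) (by omega)

theorem braidPrefix_apply_of (hφ : IsStandardBraidAction φ) (j : Fin (m + 1)) :
    braidPrefix φ m (of j) = of (Fin.last m) * rotate (of j) * of (Fin.last m) := by
  obtain ⟨n, hn, rfl⟩ : ∃ n ≤ m, (n : Fin (m + 1)) = j :=
    ⟨j, Nat.lt_succ_iff.1 j.isLt, Fin.cast_val_eq_self j⟩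
  have hlast : genNat m = of (Fin.last m) := congrArg of (Fin.natCast_eq_last m)
  change braidPrefix φ m (genNat n) = _
  rw [braidPrefix_apply_genNat hφ le_rfl hn, hlast, rotate, map_of]
  split_ifs with h₀
  · subst h₀
    rw [Nat.cast_zero, zero_sub, neg_eq_of_add_eq_zero_left (Fin.last_add_one m), of_mul_self,
      one_mul]
  · rw [genNat, Nat.cast_pred (by omega)]

theorem rotate_eq_of_forall_apply_eq (hφ : IsStandardBraidAction φ) {w : FreeProdC2 (m + 1)}
    (hw : ∀ i, φ i w = w) : rotate w = of (Fin.last m) * w * of (Fin.last m) := by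
  have hconj : (braidPrefix φ m).toMonoidHom =
      (MulAut.conj (of (Fin.last m))).toMonoidHom.comp rotate :=
    PresentedGroup.ext fun j => by simp [braidPrefix_apply_of hφ, of_inv]
  have := DFunLike.congr_fun hconj w
  simp only [MulEquiv.coe_toMonoidHom, braidPrefix_apply_eq_self hw, MonoidHom.coe_comp,
    Function.comp_apply, MulAut.conj_apply, of_inv] at this
  conv_rhs => rw [this, ← mul_assoc, ← mul_assoc, of_mul_self, one_mul, mul_assoc, of_mul_self,
    mul_one]

theorem apply_delta (hφ : IsStandardBraidAction φ) (i : Fin m) : φ i (delta m) = delta m := by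
  have hfix (l : List ℕ) (hl : ∀ n ∈ l, n ≤ m ∧ n ≠ i ∧ n ≠ i + 1) :
      φ i (word (l.map Nat.cast)) = word (l.map Nat.cast) := by
    induction l with
    | nil => simp
    | cons n l ih =>
      simp only [List.forall_mem_cons] at hl
      rw [List.map_cons, word_cons, map_mul, ih hl.2]
      exact congrArg (· * _) (apply_genNat_of_ne hφ i hl.1.1 hl.1.2.1 hl.1.2.2)
  have hpair : φ i (word (((List.range 2).map ((i : ℕ) + ·)).map Nat.cast)) =
      word (((List.range 2).map ((i : ℕ) + ·)).map Nat.cast) := by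
    rw [show ((List.range 2).map ((i : ℕ) + ·)).map (Nat.cast : ℕ → Fin (m + 1)) =
      [((i : ℕ) : Fin (m + 1)), ((i + 1 : ℕ) : Fin (m + 1))] by simp [List.range_succ]]
    change φ i (genNat i * (genNat (i + 1) * 1)) = genNat i * (genNat (i + 1) * 1)
    rw [mul_one, map_mul, apply_genNat_self hφ, apply_genNat_succ hφ, ← mul_assoc, ← mul_assoc,
      genNat, of_mul_self, one_mul]
  obtain ⟨r, hr⟩ : ∃ r, m + 1 = i + (2 + r) := ⟨m - 1 - i, by omega⟩
  rw [delta, show List.range (m + 1) = List.range (i + (2 + r)) by rw [hr], List.range_add,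
    List.range_add, List.map_append, List.map_append, List.map_append, word_append, word_append,
    map_mul, map_mul, hfix _ fun n hn => ?_, hpair, hfix _ fun n hn => ?_]
  · obtain ⟨_, hb, rfl⟩ := List.mem_map.1 hn
    obtain ⟨a, ha, rfl⟩ := List.mem_map.1 hb
    rw [List.mem_range] at ha
    omega
  · rw [List.mem_range] at hn
    omega

end braid

end FreeProdC2

/-- let `K = ⋆_{m+1} C₂` (`n = m+1 ≥ 2` factors) with the braid action
given by automorphisms `φᵢ : xᵢ ↦ x_{i+1}, x_{i+1} ↦ x_{i+1} xᵢ x_{i+1}, x_j ↦ x_j`.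
Then the subgroup of elements fixed by every braid automorphism is the infinite cyclic
subgroup generated by `δ = x₀x₁⋯x_m`. -/
theorem stmt15 (m : ℕ) (hm : 1 ≤ m)
    (φ : Fin m → MulAut (PresentedGroup (relC2s (m + 1))))
    (hφ : ∀ (i : Fin m) (j : Fin (m + 1)),
      φ i (PresentedGroup.of j) =
        if j = i.castSucc then PresentedGroup.of i.succ
        else if j = i.succ then
          PresentedGroup.of i.succ * PresentedGroup.of i.castSucc * PresentedGroup.of i.succ
        else PresentedGroup.of j) :
    ¬ IsOfFinOrder
      ((List.ofFn fun j : Fin (m + 1) =>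
        (PresentedGroup.of j : PresentedGroup (relC2s (m + 1)))).prod) ∧
    ∀ w : PresentedGroup (relC2s (m + 1)),
      (∀ i : Fin m, φ i w = w) ↔
      w ∈ Subgroup.zpowers
        (List.ofFn fun j : Fin (m + 1) =>
          (PresentedGroup.of j : PresentedGroup (relC2s (m + 1)))).prod := by
  rw [FreeProdC2.prod_ofFn_of]
  refine ⟨FreeProdC2.not_isOfFinOrder_delta hm, fun w => ⟨fun hw => ?_, ?_⟩⟩
  · exact FreeProdC2.mem_zpowers_delta_of_rotate_eq hm
      (FreeProdC2.rotate_eq_of_forall_apply_eq hφ hw)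
  · rintro ⟨k, rfl⟩ i
    rw [map_zpow, FreeProdC2.apply_delta hφ]
end
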